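/- arXiv:2511.20925 — 10 statements merged into one kernel-verified Lean document; each statement's English description precedes it below -/
import Mathlib

section
/- Let k ≥ 3 and let D ⊆ {0,1,…,k}. The level set W_D is a set of uniqueness for (B^k_2)_+ if and only if there exist i, j ∈ D such that 2 ≤ |i − j| ≤ k − 1. -/
/-- Number of coordinates of `x ∈ {−1,+1}^k` (encoded as `Fin k → Bool`, `true ↔ +1`)
equal to `+1`. -/
def PosCount {k : ℕ} (x : Fin k → Bool) : ℕ :=
  (Finset.univ.filter fun i => x i = true).card

/-- Walsh function `w_L(x) = ∏_{j ∈ L} x_j` on `{−1,+1}^k`, `true ↔ +1`. -/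
noncomputable def Walsh {k : ℕ} (L : Finset (Fin k)) : (Fin k → Bool) → ℝ :=
  fun x => ∏ j ∈ L, (if x j then (1 : ℝ) else -1)

/-- `B^k_q`: the linear span of the Walsh functions `w_L` with `|L| ≤ q`. -/
noncomputable def BSpace (k q : ℕ) : Submodule ℝ ((Fin k → Bool) → ℝ) :=
  Submodule.span ℝ { f | ∃ L : Finset (Fin k), L.card ≤ q ∧ f = Walsh L }

/-- `(B^k_q)_+`: the nonnegative cone of `B^k_q`. -/
noncomputable def BPlus (k q : ℕ) : Set ((Fin k → Bool) → ℝ) :=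
  { φ | φ ∈ BSpace k q ∧ ∀ x, 0 ≤ φ x }

/-- `U` is a set of uniqueness for the class `C`. -/
def IsUniqSet {k : ℕ} (C : Set ((Fin k → Bool) → ℝ)) (U : Set (Fin k → Bool)) : Prop :=
  ∀ φ ∈ C, (∀ x ∈ U, φ x = 0) → φ = 0

/-- `u(k,q)`: minimal cardinality of a set of uniqueness for `(B^k_q)_+`. -/
noncomputable def uMin (k q : ℕ) : ℕ :=
  sInf { n | ∃ U : Set (Fin k → Bool), U.ncard = n ∧ IsUniqSet (BPlus k q) U }

/-- Level set `W_D`. -/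
def LevelSet (k : ℕ) (D : Set ℕ) : Set (Fin k → Bool) :=
  { x | PosCount x ∈ D }

/-- Subcube of `{−1,+1}^k` obtained by fixing the coordinates in `F` to the signs `ε`. -/
def Subcube {k : ℕ} (F : Finset (Fin k)) (ε : Fin k → Bool) : Set (Fin k → Bool) :=
  { x | ∀ i ∈ F, x i = ε i }

/-- `g(k,q)`: minimal cardinality of a subset of `{−1,+1}^k` meeting every `(k−q)`-subcube. -/
noncomputable def gMin (k q : ℕ) : ℕ :=
  sInf { n | ∃ A : Set (Fin k → Bool), A.ncard = n ∧
    ∀ (F : Finset (Fin k)) (ε : Fin k → Bool), F.card = q → (A ∩ Subcube F ε).Nonempty }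

/-- Binomial coefficient `C(n,r)` for integer `r`, with `C(n,r) = 0` for `r < 0` or `r > n`. -/
def Cb (n : ℕ) (r : ℤ) : ℕ := if r < 0 then 0 else n.choose r.toNat
namespace UAux

noncomputable def eps (b : Bool) : ℝ := if b then 1 else -1

def Lev (k s : ℕ) : Finset (Fin k → Bool) := Finset.univ.filter fun x => PosCount x = s

variable {k : ℕ}

lemma eps_sq (b : Bool) : eps b * eps b = 1 := by cases b <;> simp [eps]

lemma posCount_le (x : Fin k → Bool) : PosCount x ≤ k := by
  have := Finset.card_filter_le (Finset.univ : Finset (Fin k)) (fun i => x i = true)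
  simpa [PosCount] using this

lemma sum_eps (x : Fin k → Bool) : ∑ i, eps (x i) = 2 * (PosCount x : ℝ) - k := by
  have h : ∀ i, eps (x i) = 2 * (if x i = true then (1:ℝ) else 0) - 1 := by
    intro i; cases hx : x i <;> simp [eps, hx] <;> norm_num
  rw [Finset.sum_congr rfl (fun i _ => h i)]
  rw [Finset.sum_sub_distrib, ← Finset.mul_sum, Finset.sum_boole]
  simp [PosCount]

lemma exists_level {s : ℕ} (hs : s ≤ k) : ∃ x : Fin k → Bool, PosCount x = s := by
  rcases eq_or_lt_of_le hs with h | h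
  · exact ⟨fun _ => true, by simp [PosCount, h]⟩
  · refine ⟨fun i => decide ((i:ℕ) < s), ?_⟩
    have : (Finset.univ.filter fun i : Fin k => (decide ((i:ℕ) < s)) = true)
        = Finset.Iio (⟨s, h⟩ : Fin k) := by
      ext i; simp [Finset.mem_Iio, Fin.lt_def]
    simp only [PosCount, this, Fin.card_Iio]

lemma lev_nonempty {s : ℕ} (hs : s ≤ k) : (Lev k s).Nonempty := by
  obtain ⟨x, hx⟩ := exists_level (k := k) hs
  exact ⟨x, by simp [Lev, hx]⟩

lemma posCount_comp (π : Equiv.Perm (Fin k)) (x : Fin k → Bool) :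
    PosCount (x ∘ π) = PosCount x := by
  unfold PosCount
  apply Finset.card_bij (fun a _ => π a)
  · intro a ha; simp_all
  · intro a _ b _ h; exact π.injective h
  · intro b hb; exact ⟨π.symm b, by simp_all, by simp⟩

lemma sum_comp_perm (π : Equiv.Perm (Fin k)) (f : (Fin k → Bool) → ℝ) (s : ℕ) :
    ∑ x ∈ Lev k s, f (x ∘ π) = ∑ x ∈ Lev k s, f x := by
  apply Finset.sum_nbij' (fun x => x ∘ π) (fun x => x ∘ π.symm)
  · intro a ha; simp only [Lev, Finset.mem_filter, Finset.mem_univ, true_and] at *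
    rw [posCount_comp]; exact ha
  · intro a ha; simp only [Lev, Finset.mem_filter, Finset.mem_univ, true_and] at *
    rw [posCount_comp]; exact ha
  · intro a _; funext i; simp
  · intro a _; funext i; simp
  · intro a _; rfl

lemma exists_perm_pair {α : Type*} [DecidableEq α] (a b a' b' : α) (hab : a ≠ b)
    (hab' : a' ≠ b') : ∃ π : Equiv.Perm α, π a = a' ∧ π b = b' := by
  classical
  refine ⟨(Equiv.swap a a').trans (Equiv.swap (Equiv.swap a a' b) b'), ?_, ?_⟩
  · simp only [Equiv.trans_apply, Equiv.swap_apply_left]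
    rw [Equiv.swap_apply_of_ne_of_ne]
    · exact fun h => hab ((Equiv.swap a a').injective (by rw [Equiv.swap_apply_left]; exact h))
    · exact hab'
  · simp [Equiv.trans_apply, Equiv.swap_apply_left]

lemma sum_walsh_single (a : Fin k) (s : ℕ) :
    (k:ℝ) * ∑ x ∈ Lev k s, eps (x a) = (Lev k s).card * (2*s - k) := by
  have hsym : ∀ i : Fin k, ∑ x ∈ Lev k s, eps (x i) = ∑ x ∈ Lev k s, eps (x a) := by
    intro i
    have h := sum_comp_perm (Equiv.swap a i) (fun y => eps (y a)) s
    simpa [Function.comp_def, Equiv.swap_apply_left] using h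
  calc (k:ℝ) * ∑ x ∈ Lev k s, eps (x a)
      = ∑ i : Fin k, ∑ x ∈ Lev k s, eps (x i) := by
        rw [Finset.sum_congr rfl (fun i _ => hsym i), Finset.sum_const, Finset.card_univ,
          Fintype.card_fin, nsmul_eq_mul]
    _ = ∑ x ∈ Lev k s, ∑ i, eps (x i) := Finset.sum_comm
    _ = ∑ _x ∈ Lev k s, (2*(s:ℝ) - k) := by
        apply Finset.sum_congr rfl; intro x hx
        simp only [Lev, Finset.mem_filter, Finset.mem_univ, true_and] at hx
        rw [sum_eps, hx]
    _ = (Lev k s).card * (2*s-k) := by rw [Finset.sum_const, nsmul_eq_mul]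

lemma sum_walsh_pair (a b : Fin k) (hab : a ≠ b) (s : ℕ) :
    ((k:ℝ)*k - k) * ∑ x ∈ Lev k s, eps (x a) * eps (x b)
      = (Lev k s).card * ((2*s - k)^2 - k) := by
  have hsym : ∀ p ∈ (Finset.univ : Finset (Fin k)).offDiag,
      ∑ x ∈ Lev k s, eps (x p.1) * eps (x p.2) = ∑ x ∈ Lev k s, eps (x a) * eps (x b) := by
    rintro ⟨i, j⟩ hp
    simp only [Finset.mem_offDiag, Finset.mem_univ, true_and] at hp
    obtain ⟨π, hπa, hπb⟩ := exists_perm_pair a b i j hab hp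
    have h := sum_comp_perm π (fun y => eps (y a) * eps (y b)) s
    simpa [Function.comp_def, hπa, hπb] using h
  have key : ∑ p ∈ (Finset.univ : Finset (Fin k)).offDiag,
      ∑ x ∈ Lev k s, eps (x p.1) * eps (x p.2)
      = ∑ _x ∈ Lev k s, ((2*(s:ℝ) - k)^2 - k) := by
    rw [Finset.sum_comm]
    apply Finset.sum_congr rfl
    intro x hx
    simp only [Lev, Finset.mem_filter, Finset.mem_univ, true_and] at hx
    have h1 : (∑ i, eps (x i)) * (∑ j, eps (x j))
        = ∑ p ∈ Finset.univ ×ˢ Finset.univ, eps (x p.1) * eps (x p.2) := by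
      rw [Finset.sum_mul_sum, Finset.sum_product]
    have h2 : ∑ p ∈ (Finset.univ : Finset (Fin k)).diag, eps (x p.1) * eps (x p.2) = k := by
      rw [Finset.sum_diag]
      simp [eps_sq]
    have h3 : ∑ p ∈ Finset.univ ×ˢ Finset.univ, eps (x p.1) * eps (x p.2)
        = (∑ p ∈ (Finset.univ : Finset (Fin k)).diag, eps (x p.1) * eps (x p.2))
          + ∑ p ∈ (Finset.univ : Finset (Fin k)).offDiag, eps (x p.1) * eps (x p.2) := by
      rw [← Finset.sum_union (Finset.disjoint_diag_offDiag _), Finset.diag_union_offDiag]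
    have h4 := sum_eps x
    rw [hx] at h4
    have : ∑ p ∈ (Finset.univ : Finset (Fin k)).offDiag, eps (x p.1) * eps (x p.2)
        = (2*(s:ℝ) - k)^2 - k := by
      rw [← h1, h4] at h3
      rw [h2] at h3
      linarith [h3]
    exact this
  rw [Finset.sum_congr rfl hsym, Finset.sum_const, Finset.offDiag_card,
    Finset.card_univ, Fintype.card_fin, nsmul_eq_mul] at key
  rw [Finset.sum_const, nsmul_eq_mul] at key
  rw [← key]
  congr 1
  have hle : k ≤ k * k := Nat.le_mul_of_pos_left k a.pos
  push_cast [Nat.cast_sub hle]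
  ring

end UAux

namespace UAux2
open UAux

variable {k : ℕ}

lemma levelsum_quadratic (hk : 3 ≤ k) {φ : (Fin k → Bool) → ℝ} (hφ : φ ∈ BSpace k 2) :
    ∃ α β γ : ℝ, ∀ s : ℕ, s ≤ k →
      ∑ x ∈ Lev k s, φ x
        = (Lev k s).card * (α + β * (2*s - k) + γ * (2*s - k)^2) := by
  have hk3 : (3:ℝ) ≤ (k:ℝ) := by exact_mod_cast hk
  have hk0 : (k:ℝ) ≠ 0 := by linarith
  have hkk : (k:ℝ)*k - k ≠ 0 := by nlinarith
  have hφ' : φ ∈ Submodule.span ℝ { f : (Fin k → Bool) → ℝ |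
      ∃ L : Finset (Fin k), L.card ≤ 2 ∧ f = Walsh L } := hφ
  clear hφ
  induction hφ' using Submodule.span_induction with
  | mem f hf =>
      obtain ⟨L, hL, rfl⟩ := hf
      have h2 : L.card = 0 ∨ L.card = 1 ∨ L.card = 2 := by omega
      rcases h2 with h|h|h
      · rw [Finset.card_eq_zero] at h; subst h
        refine ⟨1, 0, 0, ?_⟩
        intro s _
        simp [Walsh]
      · rw [Finset.card_eq_one] at h; obtain ⟨a, rfl⟩ := h
        refine ⟨0, 1/(k:ℝ), 0, ?_⟩
        intro s _
        have h1 := sum_walsh_single a s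
        have hw : ∀ x, Walsh {a} x = eps (x a) := by
          intro x; simp [Walsh, eps]
        rw [Finset.sum_congr rfl (fun x _ => hw x)]
        have hS : ∑ x ∈ Lev k s, eps (x a)
            = ((Lev k s).card : ℝ) * (2*s - k) / k := by
          rw [eq_div_iff hk0]; linear_combination h1
        rw [hS]; field_simp
        try ring
      · rw [Finset.card_eq_two] at h; obtain ⟨a, b, hab, rfl⟩ := h
        refine ⟨-(k:ℝ)/((k:ℝ)*k - k), 0, 1/((k:ℝ)*k - k), ?_⟩
        intro s _
        have h1 := sum_walsh_pair a b hab s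
        have hw : ∀ x, Walsh {a,b} x = eps (x a) * eps (x b) := by
          intro x; simp only [Walsh, Finset.prod_pair hab]; rfl
        rw [Finset.sum_congr rfl (fun x _ => hw x)]
        have hS : ∑ x ∈ Lev k s, eps (x a) * eps (x b)
            = ((Lev k s).card : ℝ) * ((2*s - k)^2 - k) / ((k:ℝ)*k - k) := by
          rw [eq_div_iff hkk]; linear_combination h1
        rw [hS]; field_simp
        try ring
  | zero => exact ⟨0, 0, 0, by simp⟩
  | add f g _ _ hf hg =>
      obtain ⟨α1, β1, γ1, h1⟩ := hf
      obtain ⟨α2, β2, γ2, h2⟩ := hg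
      refine ⟨α1+α2, β1+β2, γ1+γ2, ?_⟩
      intro s hs
      have : ∑ x ∈ Lev k s, (f + g) x = (∑ x ∈ Lev k s, f x) + ∑ x ∈ Lev k s, g x := by
        simp [Finset.sum_add_distrib]
      rw [this, h1 s hs, h2 s hs]; ring
  | smul c f _ hf =>
      obtain ⟨α, β, γ, h1⟩ := hf
      refine ⟨c*α, c*β, c*γ, ?_⟩
      intro s hs
      have : ∑ x ∈ Lev k s, (c • f) x = c * ∑ x ∈ Lev k s, f x := by
        simp [Finset.mul_sum]
      rw [this, h1 s hs]; ring

end UAux2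

namespace UAux3
open UAux UAux2

variable {k : ℕ}

lemma quad_vanish {α β γ u v w1 w2 : ℝ} (huv : u ≠ v)
    (h1 : α + β*u + γ*u^2 = 0) (h2 : α + β*v + γ*v^2 = 0)
    (hw1 : 0 ≤ α + β*w1 + γ*w1^2) (hw2 : 0 ≤ α + β*w2 + γ*w2^2)
    (hs1 : (w1-u)*(w1-v) < 0) (hs2 : 0 < (w2-u)*(w2-v)) :
    α = 0 ∧ β = 0 ∧ γ = 0 := by
  have hne : u - v ≠ 0 := sub_ne_zero.mpr huv
  have hβ : β + γ*(u+v) = 0 := by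
    have h3 : (u - v) * (β + γ*(u+v)) = 0 := by linear_combination h1 - h2
    rcases mul_eq_zero.mp h3 with h|h
    · exact absurd h hne
    · exact h
  have hα : α = γ*u*v := by linear_combination h1 - u * hβ
  have hq1 : α + β*w1 + γ*w1^2 = γ*((w1-u)*(w1-v)) := by
    linear_combination (w1 - u*v/(1:ℝ))*0 + hα + w1 * hβ
  have hq2 : α + β*w2 + γ*w2^2 = γ*((w2-u)*(w2-v)) := by
    linear_combination hα + w2 * hβ
  rw [hq1] at hw1; rw [hq2] at hw2
  have hγ : γ = 0 := by nlinarith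
  refine ⟨by rw [hα, hγ]; ring, by linarith [hβ, mul_eq_zero_of_left hγ (u+v)], hγ⟩

lemma walsh_mem {L : Finset (Fin k)} (h : L.card ≤ 2) : Walsh L ∈ BSpace k 2 :=
  Submodule.subset_span ⟨L, h, rfl⟩

lemma one_mem : (fun _ : Fin k → Bool => (1:ℝ)) ∈ BSpace k 2 := by
  have h := walsh_mem (k := k) (L := ∅) (by simp)
  have he : Walsh (∅ : Finset (Fin k)) = fun _ => (1:ℝ) := by funext x; simp [Walsh]
  rwa [he] at h

lemma sigma_mem : (fun x : Fin k → Bool => ∑ i, eps (x i)) ∈ BSpace k 2 := by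
  have he : (fun x : Fin k → Bool => ∑ i, eps (x i)) = ∑ i : Fin k, Walsh {i} := by
    funext x; rw [Finset.sum_apply]
    exact Finset.sum_congr rfl (fun i _ => by simp [Walsh, eps])
  rw [he]; exact Submodule.sum_mem _ (fun i _ => walsh_mem (by simp))

lemma offDiag_eps (x : Fin k → Bool) :
    ∑ p ∈ (Finset.univ : Finset (Fin k)).offDiag, eps (x p.1) * eps (x p.2)
      = (∑ i, eps (x i))^2 - k := by
  have h1 : (∑ i, eps (x i)) * (∑ j, eps (x j))
      = ∑ p ∈ Finset.univ ×ˢ Finset.univ, eps (x p.1) * eps (x p.2) := by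
    rw [Finset.sum_mul_sum, Finset.sum_product]
  have h2 : ∑ p ∈ (Finset.univ : Finset (Fin k)).diag, eps (x p.1) * eps (x p.2) = k := by
    rw [Finset.sum_diag]; simp [eps_sq]
  have h3 : ∑ p ∈ Finset.univ ×ˢ Finset.univ, eps (x p.1) * eps (x p.2)
      = (∑ p ∈ (Finset.univ : Finset (Fin k)).diag, eps (x p.1) * eps (x p.2))
        + ∑ p ∈ (Finset.univ : Finset (Fin k)).offDiag, eps (x p.1) * eps (x p.2) := by
    rw [← Finset.sum_union (Finset.disjoint_diag_offDiag _), Finset.diag_union_offDiag]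
  rw [← h1, h2] at h3
  have : (∑ i, eps (x i))^2 = (∑ i, eps (x i)) * (∑ j, eps (x j)) := by ring
  rw [this, h3]; ring

lemma sigma_sq_mem : (fun x : Fin k → Bool => (∑ i, eps (x i))^2) ∈ BSpace k 2 := by
  have he : (fun x : Fin k → Bool => (∑ i, eps (x i))^2)
      = (k:ℝ) • (fun _ => (1:ℝ))
        + ∑ p ∈ (Finset.univ : Finset (Fin k)).offDiag, Walsh {p.1, p.2} := by
    funext x
    simp only [Pi.add_apply, Pi.smul_apply, smul_eq_mul, Finset.sum_apply, mul_one]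
    have hc : ∀ p ∈ (Finset.univ : Finset (Fin k)).offDiag,
        Walsh {p.1, p.2} x = eps (x p.1) * eps (x p.2) := by
      rintro ⟨i, j⟩ hp
      simp only [Finset.mem_offDiag] at hp
      simp only [Walsh, Finset.prod_pair hp.2.2]; rfl
    rw [Finset.sum_congr rfl hc, offDiag_eps]; ring
  rw [he]
  refine Submodule.add_mem _ (Submodule.smul_mem _ _ one_mem)
    (Submodule.sum_mem _ fun p _ => walsh_mem ?_)
  exact le_trans (Finset.card_insert_le _ _) (by simp)

lemma quadPC_mem (A B C : ℝ) :
    (fun x : Fin k → Bool => A + B * (PosCount x : ℝ) + C * (PosCount x : ℝ)^2)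
      ∈ BSpace k 2 := by
  have hfun : (fun x : Fin k → Bool => A + B * (PosCount x : ℝ) + C * (PosCount x : ℝ)^2)
      = (A + B*(k:ℝ)/2 + C*(k:ℝ)^2/4) • (fun _ => (1:ℝ))
        + (B/2 + C*(k:ℝ)/2) • (fun x : Fin k → Bool => ∑ i, eps (x i))
        + (C/4) • (fun x : Fin k → Bool => (∑ i, eps (x i))^2) := by
    funext x
    have h := sum_eps x
    simp only [Pi.add_apply, Pi.smul_apply, smul_eq_mul, mul_one]
    rw [h]; ring
  rw [hfun]
  exact Submodule.add_mem _ (Submodule.add_mem _ (Submodule.smul_mem _ _ one_mem)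
    (Submodule.smul_mem _ _ sigma_mem)) (Submodule.smul_mem _ _ sigma_sq_mem)

end UAux3

namespace UAux4
open UAux UAux2 UAux3

lemma uniq_of_pair (k : ℕ) (hk : 3 ≤ k) (D : Set ℕ) (i j : ℕ)
    (hi : i ∈ D) (hj : j ∈ D) (hij : i + 2 ≤ j) (hjk : j ≤ k) (hjik : j - i ≤ k - 1) :
    IsUniqSet (BPlus k 2) (LevelSet k D) := by
  rintro φ ⟨hmem, hpos⟩ hvan
  obtain ⟨α, β, γ, hq⟩ := levelsum_quadratic hk hmem
  have hik : i ≤ k := by omega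
  have hNpos : ∀ s : ℕ, s ≤ k → (0:ℝ) < ((Lev k s).card : ℝ) := by
    intro s hs
    exact_mod_cast Finset.card_pos.mpr (lev_nonempty hs)
  have hzero : ∀ s : ℕ, s ≤ k → s ∈ D →
      α + β*(2*(s:ℝ)-k) + γ*(2*(s:ℝ)-k)^2 = 0 := by
    intro s hs hsD
    have hsum : ∑ x ∈ Lev k s, φ x = 0 := by
      apply Finset.sum_eq_zero; intro x hx
      simp only [Lev, Finset.mem_filter, Finset.mem_univ, true_and] at hx
      exact hvan x (by show PosCount x ∈ D; rw [hx]; exact hsD)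
    have h := hq s hs; rw [hsum] at h
    rcases mul_eq_zero.mp h.symm with h'|h'
    · exact absurd h' (ne_of_gt (hNpos s hs))
    · exact h'
  have hge : ∀ s : ℕ, s ≤ k →
      0 ≤ α + β*(2*(s:ℝ)-k) + γ*(2*(s:ℝ)-k)^2 := by
    intro s hs
    have hsum : 0 ≤ ∑ x ∈ Lev k s, φ x := Finset.sum_nonneg (fun x _ => hpos x)
    rw [hq s hs] at hsum
    exact (mul_nonneg_iff_of_pos_left (hNpos s hs)).mp hsum
  -- apply quad_vanish
  have hcast : (i:ℝ) + 2 ≤ (j:ℝ) := by exact_mod_cast hij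
  have hjkR : (j:ℝ) ≤ k := by exact_mod_cast hjk
  have habg : α = 0 ∧ β = 0 ∧ γ = 0 := by
    have h1 := hzero i hik hi
    have h2 := hzero j hjk hj
    have hw1 := hge (i+1) (by omega)
    have huv : 2*(i:ℝ)-k ≠ 2*(j:ℝ)-k := by intro h; nlinarith
    have hi1 : ((i+1:ℕ):ℝ) = (i:ℝ)+1 := by push_cast; ring
    rw [hi1] at hw1
    have hs1 : ((2*((i:ℝ)+1)-k) - (2*(i:ℝ)-k)) * ((2*((i:ℝ)+1)-k) - (2*(j:ℝ)-k)) < 0 := by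
      nlinarith
    rcases Nat.eq_zero_or_pos i with hi0 | hipos
    · subst hi0
      have hjk1 : j + 1 ≤ k := by omega
      have hw2 := hge (j+1) hjk1
      have hj1 : ((j+1:ℕ):ℝ) = (j:ℝ)+1 := by push_cast; ring
      rw [hj1] at hw2
      have hs2 : 0 < ((2*((j:ℝ)+1)-k) - (2*(0:ℕ)-k)) * ((2*((j:ℝ)+1)-k) - (2*(j:ℝ)-k)) := by
        push_cast; nlinarith
      exact quad_vanish huv h1 h2 hw1 hw2 hs1 hs2
    · have hw2 := hge (i-1) (by omega)
      have him : ((i-1:ℕ):ℝ) = (i:ℝ)-1 := by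
        have : (1:ℕ) ≤ i := hipos
        push_cast [Nat.cast_sub this]; ring
      rw [him] at hw2
      have hs2 : 0 < ((2*((i:ℝ)-1)-k) - (2*(i:ℝ)-k)) * ((2*((i:ℝ)-1)-k) - (2*(j:ℝ)-k)) := by
        nlinarith
      exact quad_vanish huv h1 h2 hw1 hw2 hs1 hs2
  obtain ⟨hα, hβ, hγ⟩ := habg
  funext x
  have hx : x ∈ Lev k (PosCount x) := by simp [Lev]
  have hsum : ∑ y ∈ Lev k (PosCount x), φ y = 0 := by
    rw [hq (PosCount x) (posCount_le x), hα, hβ, hγ]; ring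
  have := (Finset.sum_eq_zero_iff_of_nonneg (fun y _ => hpos y)).mp hsum x hx
  simpa using this

lemma not_uniq_of_quad (k : ℕ) (D : Set ℕ) (γ0 a b : ℝ)
    (hnn : ∀ s : ℕ, s ≤ k → 0 ≤ γ0 * ((s:ℝ) - a) * ((s:ℝ) - b))
    (hvan : ∀ d ∈ D, γ0 * ((d:ℝ) - a) * ((d:ℝ) - b) = 0)
    (s0 : ℕ) (hs0 : s0 ≤ k) (hnz : γ0 * ((s0:ℝ) - a) * ((s0:ℝ) - b) ≠ 0) :
    ¬ IsUniqSet (BPlus k 2) (LevelSet k D) := by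
  intro hU
  set φ : (Fin k → Bool) → ℝ :=
    fun x => γ0 * ((PosCount x : ℝ) - a) * ((PosCount x:ℝ) - b) with hφdef
  have hmem : φ ∈ BSpace k 2 := by
    have h := quadPC_mem (k:=k) (γ0*a*b) (-(γ0*(a+b))) γ0
    have he : (fun x : Fin k → Bool => γ0*a*b + (-(γ0*(a+b))) * (PosCount x:ℝ)
        + γ0 * (PosCount x:ℝ)^2) = φ := by
      funext x; simp only [hφdef]; ring
    rwa [he] at h
  have hposφ : ∀ x, 0 ≤ φ x := fun x => hnn _ (posCount_le x)
  have hz : ∀ x ∈ LevelSet k D, φ x = 0 := fun x hx => hvan _ hx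
  have h0 := hU φ ⟨hmem, hposφ⟩ hz
  obtain ⟨x0, hx0⟩ := exists_level (k:=k) hs0
  have h1 : φ x0 = 0 := by rw [h0]; rfl
  rw [hφdef] at h1
  simp only [hx0] at h1
  exact hnz h1

end UAux4

/-- For `k ≥ 3` and `D ⊆ {0,…,k}`, the level set `W_D` is a set of uniqueness
for `(B^k_2)_+` iff there are `i, j ∈ D` with `2 ≤ |i − j| ≤ k − 1`. -/
theorem stmt_0 (k : ℕ) (hk : 3 ≤ k) (D : Set ℕ) (hD : ∀ d ∈ D, d ≤ k) :
    IsUniqSet (BPlus k 2) (LevelSet k D) ↔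
      ∃ i ∈ D, ∃ j ∈ D, 2 ≤ |(i : ℤ) - (j : ℤ)| ∧ |(i : ℤ) - (j : ℤ)| ≤ (k : ℤ) - 1 := by
  constructor
  · intro hU
    by_contra hnp
    push_neg at hnp
    -- nat form of the negated pair condition
    have hnp' : ∀ e ∈ D, ∀ f ∈ D, e + 2 ≤ f → e + k ≤ f := by
      intro e he f hf hef
      have habs : |(e:ℤ) - f| = (f:ℤ) - e := by
        rw [abs_sub_comm, abs_of_nonneg (by omega)]
      have h := hnp e he f hf (by rw [habs]; omega)
      rw [habs] at h; omega
    -- case split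
    by_cases hOk : ∃ m : ℕ, ∀ d ∈ D, d = m ∨ d = m + 1
    · obtain ⟨m, hm⟩ := hOk
      refine UAux4.not_uniq_of_quad k D 1 m (m+1) ?_ ?_
        (if m + 2 ≤ k then m + 2 else 0) ?_ ?_ hU
      · intro s _
        rcases le_or_gt s m with h | h
        · have h1 : (s:ℝ) ≤ m := by exact_mod_cast h
          nlinarith
        · have h1 : (m:ℝ) + 1 ≤ s := by exact_mod_cast h
          nlinarith
      · intro d hd
        rcases hm d hd with h | h <;> subst h
        · push_cast; ring
        · push_cast; ring
      · split <;> omega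
      · split
        · rename_i h
          push_cast
          intro hcon
          nlinarith [hcon]
        · rename_i h
          have hm2 : 2 ≤ m := by omega
          have hm2R : (2:ℝ) ≤ m := by exact_mod_cast hm2
          push_cast
          intro hcon
          nlinarith [hcon]
    · -- D ⊆ {0, k}
      have hall : ∀ d ∈ D, d = 0 ∨ d = k := by
        by_contra hnd
        push_neg at hnd
        obtain ⟨d, hd, hd0, hdk⟩ := hnd
        have hdlt : 0 < d ∧ d < k := ⟨Nat.pos_of_ne_zero hd0, lt_of_le_of_ne (hD d hd) hdk⟩
        have hrange : ∀ e ∈ D, d - 1 ≤ e ∧ e ≤ d + 1 := by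
          intro e he
          constructor
          · by_contra hlt
            have : e + 2 ≤ d := by omega
            have := hnp' e he d hd this
            omega
          · by_contra hlt
            have : d + 2 ≤ e := by omega
            have := hnp' d hd e he this
            have := hD e he
            omega
        by_cases hdp : d + 1 ∈ D
        · apply hOk
          refine ⟨d, fun e he => ?_⟩
          rcases hrange e he with ⟨h1, h2⟩
          by_contra hcon
          push_neg at hcon
          have he' : e = d - 1 := by omega
          have : e + 2 ≤ d + 1 := by omega
          have := hnp' e he (d+1) hdp this
          omega
        · apply hOk
          refine ⟨d - 1, fun e he => ?_⟩
          rcases hrange e he with ⟨h1, h2⟩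
          have : e ≠ d + 1 := fun h => hdp (h ▸ he)
          omega
      refine UAux4.not_uniq_of_quad k D (-1) 0 k ?_ ?_ 1 (by omega) ?_ hU
      · intro s hs
        have h1 : (s:ℝ) ≤ k := by exact_mod_cast hs
        have h2 : (0:ℝ) ≤ s := by positivity
        nlinarith
      · intro d hd
        rcases hall d hd with h | h <;> subst h
        · push_cast; ring
        · push_cast; ring
      · have hkR : (3:ℝ) ≤ k := by exact_mod_cast hk
        push_cast
        intro hcon
        nlinarith [hcon]
  · rintro ⟨i, hi, j, hj, h2, h1⟩
    rcases le_total i j with h | h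
    · have habs : |(i:ℤ) - j| = (j:ℤ) - i := by
        rw [abs_sub_comm, abs_of_nonneg (by omega)]
      rw [habs] at h2 h1
      exact UAux4.uniq_of_pair k hk D i j hi hj (by omega) (hD j hj) (by omega)
    · have habs : |(i:ℤ) - j| = (i:ℤ) - j := by
        rw [abs_of_nonneg (by omega)]
      rw [habs] at h2 h1
      exact UAux4.uniq_of_pair k hk D j i hj hi (by omega) (hD i hi) (by omega)
end

section
/- Let k ≥ 3. The level set W_{{1,k}} (the points of X with exactly one or exactly k coordinates equal to +1) is a set of uniqueness for (B^k_2)_+. -/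
section MyAux

open Finset

/-- indicator point of a subset -/
def ptOf {k : ℕ} (s : Finset (Fin k)) : Fin k → Bool := fun i => decide (i ∈ s)

lemma posCount_ptOf {k : ℕ} (s : Finset (Fin k)) : PosCount (ptOf s) = s.card := by
  unfold PosCount ptOf
  congr 1
  ext i
  simp

lemma level_sum {k : ℕ} (j : ℕ) (f : (Fin k → Bool) → ℝ) :
    ∑ x ∈ Finset.univ.filter (fun x => PosCount x = j), f x
      = ∑ s ∈ (Finset.univ : Finset (Fin k)).powersetCard j, f (ptOf s) := by
  refine Finset.sum_nbij' (fun x => Finset.univ.filter (fun i => x i = true))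
    (fun s => ptOf s) ?_ ?_ ?_ ?_ ?_
  · intro x hx
    simp only [mem_filter, mem_univ, true_and] at hx
    simpa [Finset.mem_powersetCard_univ, PosCount] using hx
  · intro s hs
    simp only [Finset.mem_powersetCard_univ] at hs
    simp [Finset.mem_filter, posCount_ptOf, hs]
  · intro x hx
    funext i
    by_cases h : x i = true <;> simp [ptOf, h]
  · intro s hs
    ext i
    simp [ptOf]
  · intro x hx
    have h : ptOf (Finset.univ.filter (fun i => x i = true)) = x := by
      funext i
      by_cases h : x i = true <;> simp [ptOf, h]
    rw [h]

lemma sum_pC1 {ι : Type*} (s : Finset ι) (u : ι → ℝ) :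
    ∑ t ∈ s.powersetCard 1, ∏ i ∈ t, u i = ∑ i ∈ s, u i := by
  rw [Finset.powersetCard_one, Finset.sum_map]
  simp

lemma sum_pC2 {ι : Type*} [DecidableEq ι] (s : Finset ι) (u : ι → ℝ) :
    2 * ∑ t ∈ s.powersetCard 2, ∏ i ∈ t, u i = (∑ i ∈ s, u i)^2 - ∑ i ∈ s, (u i)^2 := by
  induction s using Finset.induction with
  | empty =>
      rw [Finset.powersetCard_eq_empty.2 (by simp)]
      simp
  | @insert a s ha ih =>
      rw [show (2:ℕ) = Nat.succ 1 from rfl, Finset.powersetCard_succ_insert ha,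
        Finset.sum_union, Finset.sum_image]
      · have h1 : ∑ t ∈ s.powersetCard 1, ∏ i ∈ insert a t, u i
            = u a * ∑ i ∈ s, u i := by
          rw [← sum_pC1 s u, Finset.mul_sum]
          refine Finset.sum_congr rfl fun t ht => ?_
          have hat : a ∉ t := fun hat => ha ((Finset.mem_powersetCard.1 ht).1 hat)
          rw [Finset.prod_insert hat]
        rw [h1, Finset.sum_insert ha, Finset.sum_insert ha]
        linear_combination ih
      · intro t ht t' ht' h
        have hat : a ∉ t := fun hat => ha ((Finset.mem_powersetCard.1 ht).1 hat)
        have hat' : a ∉ t' := fun hat => ha ((Finset.mem_powersetCard.1 ht').1 hat)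
        rw [← Finset.erase_insert hat, ← Finset.erase_insert hat', h]
      · rw [Finset.disjoint_right]
        intro t htim ht
        obtain ⟨t', ht', rfl⟩ := Finset.mem_image.1 htim
        have : a ∈ s := (Finset.mem_powersetCard.1 ht).1 (Finset.mem_insert_self a t')
        exact ha this

lemma prod_ind {ι : Type*} [DecidableEq ι] (a : ι) (t : Finset ι) :
    ∏ i ∈ t, (if i = a then (-1:ℝ) else 1) = if a ∈ t then -1 else 1 := by
  by_cases h : a ∈ t
  · rw [if_pos h, ← Finset.mul_prod_erase t _ h, if_pos rfl, Finset.prod_eq_one, mul_one]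
    intro i hi
    rw [if_neg (Finset.ne_of_mem_erase hi)]
  · rw [if_neg h, Finset.prod_eq_one]
    intro i hi
    rw [if_neg]
    rintro rfl
    exact h hi

lemma sum_walsh_ne {k : ℕ} (L : Finset (Fin k)) (hL : L.Nonempty) :
    ∑ x : Fin k → Bool, Walsh L x = 0 := by
  let g : Fin k → Bool → ℝ := fun i b => if i ∈ L then (if b then (1:ℝ) else -1) else 1
  have h1 : ∀ x : Fin k → Bool, Walsh L x = ∏ i : Fin k, g i (x i) := by
    intro x
    rw [Walsh, show (∏ i : Fin k, g i (x i))
        = ∏ i : Fin k, (if i ∈ L then (if x i then (1:ℝ) else -1) else 1) from rfl,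
      Finset.prod_ite_mem, Finset.univ_inter]
  simp_rw [h1]
  rw [← Fintype.piFinset_univ, ← Finset.prod_univ_sum]
  obtain ⟨a, ha⟩ := hL
  apply Finset.prod_eq_zero (Finset.mem_univ a)
  have : ∑ b : Bool, g a b = 0 := by
    rw [Fintype.sum_bool]
    simp [g, ha]
  exact this

lemma sum_walsh_empty {k : ℕ} :
    ∑ x : Fin k → Bool, Walsh (∅ : Finset (Fin k)) x = 2^k := by
  simp [Walsh, Finset.card_univ]

end MyAux

section MyKey

open Finset

noncomputable def LS (k j : ℕ) (φ : (Fin k → Bool) → ℝ) : ℝ :=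
  ∑ x ∈ Finset.univ.filter (fun x => PosCount x = j), φ x

noncomputable def TS (k : ℕ) (φ : (Fin k → Bool) → ℝ) : ℝ := ∑ x : Fin k → Bool, φ x

lemma key_walsh (k : ℕ) (L : Finset (Fin k)) (hL2 : L.card ≤ 2) :
    ((k:ℝ)-1)*((k:ℝ)-2) * LS k 0 (Walsh L) - 2*((k:ℝ)-2) * LS k 1 (Walsh L)
        + 2 * LS k 2 (Walsh L) - 2 * LS k k (Walsh L) = 0
    ∧ 8 * TS k (Walsh L) = 2^k * (((k:ℝ)^2-5*k+8) * LS k 0 (Walsh L)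
        + 2*(3-(k:ℝ)) * LS k 1 (Walsh L) + 2 * LS k 2 (Walsh L)) := by
  -- generic level sum rewrites
  have l0 : LS k 0 (Walsh L) = Walsh L (ptOf ∅) := by
    rw [LS, level_sum, Finset.powersetCard_zero, Finset.sum_singleton]
  have lk : LS k k (Walsh L) = Walsh L (ptOf Finset.univ) := by
    have hpc : (Finset.univ : Finset (Fin k)).powersetCard k = {Finset.univ} := by
      have := Finset.powersetCard_self (Finset.univ : Finset (Fin k))
      rwa [Finset.card_fin] at this
    rw [LS, level_sum, hpc, Finset.sum_singleton]
  have l1 : LS k 1 (Walsh L) = ∑ m : Fin k, Walsh L (ptOf {m}) := by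
    rw [LS, level_sum, Finset.powersetCard_one, Finset.sum_map]
    rfl
  have l2 : LS k 2 (Walsh L)
      = ∑ t ∈ (Finset.univ : Finset (Fin k)).powersetCard 2, Walsh L (ptOf t) := by
    rw [LS, level_sum]
  have hcard : L.card = 0 ∨ L.card = 1 ∨ L.card = 2 := by omega
  rcases hcard with h | h | h
  · -- L = ∅
    rw [Finset.card_eq_zero] at h
    subst h
    have hW : ∀ t : Finset (Fin k), Walsh (∅ : Finset (Fin k)) (ptOf t) = ∏ i ∈ t, (1:ℝ) := by
      intro t; simp [Walsh]
    have h2 : 2 * LS k 2 (Walsh (∅ : Finset (Fin k))) = ((k:ℝ))^2 - (k:ℝ) := by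
      rw [l2]
      simp_rw [hW]
      rw [sum_pC2]
      simp [Finset.card_univ]
    have h1 : LS k 1 (Walsh (∅ : Finset (Fin k))) = (k:ℝ) := by
      rw [l1]; simp [hW, Finset.card_univ]
    have h0 : LS k 0 (Walsh (∅ : Finset (Fin k))) = 1 := by rw [l0, hW]; simp
    have hk' : LS k k (Walsh (∅ : Finset (Fin k))) = 1 := by rw [lk, hW]; simp
    have hT : TS k (Walsh (∅ : Finset (Fin k))) = 2^k := sum_walsh_empty
    constructor
    · rw [h0, h1, hk']; linear_combination h2
    · rw [hT, h0, h1]; linear_combination (-(2:ℝ)^k) * h2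
  · -- L = {a}
    obtain ⟨a, rfl⟩ := Finset.card_eq_one.1 h
    set u : Fin k → ℝ := fun i => if i = a then (-1:ℝ) else 1 with hu
    have hW : ∀ t : Finset (Fin k), Walsh {a} (ptOf t) = (-1) * ∏ i ∈ t, u i := by
      intro t
      rw [Walsh, Finset.prod_singleton, hu, prod_ind]
      by_cases h : a ∈ t <;> simp [ptOf, h] <;> norm_num
    have husum : ∑ i : Fin k, u i = (k:ℝ) - 2 := by
      have he : ∀ i : Fin k, u i = 1 - 2 * (if i = a then (1:ℝ) else 0) := by
        intro i; by_cases h : i = a <;> simp [hu, h] <;> norm_num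
      simp_rw [he]
      rw [Finset.sum_sub_distrib, Finset.sum_const, ← Finset.mul_sum, Finset.sum_ite_eq']
      simp [Finset.card_univ]
    have husq : ∑ i : Fin k, (u i)^2 = (k:ℝ) := by
      have he : ∀ i : Fin k, (u i)^2 = 1 := by
        intro i; by_cases h : i = a <;> simp [hu, h]
      simp_rw [he]
      simp [Finset.card_univ]
    have hsum2 := sum_pC2 (Finset.univ : Finset (Fin k)) u
    rw [husum, husq] at hsum2
    have h2 : 2 * LS k 2 (Walsh {a}) = -(((k:ℝ)-2)^2 - (k:ℝ)) := by
      rw [l2]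
      simp_rw [hW]
      rw [← Finset.mul_sum]
      linear_combination -hsum2
    have h1 : LS k 1 (Walsh {a}) = 2 - (k:ℝ) := by
      rw [l1]
      simp_rw [hW, Finset.prod_singleton]
      rw [← Finset.mul_sum, husum]
      ring
    have h0 : LS k 0 (Walsh {a}) = -1 := by
      rw [l0, hW]; simp
    have hk' : LS k k (Walsh {a}) = 1 := by
      rw [lk, hW, prod_ind]
      simp
    have hT : TS k (Walsh {a}) = 0 := sum_walsh_ne _ ⟨a, Finset.mem_singleton_self a⟩
    constructor
    · rw [h0, h1, hk']; linear_combination h2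
    · rw [hT, h0, h1]; linear_combination (-(2:ℝ)^k) * h2
  · -- L = {a, b}
    obtain ⟨a, b, hab, rfl⟩ := Finset.card_eq_two.1 h
    set u : Fin k → ℝ :=
      fun i => (if i = a then (-1:ℝ) else 1) * (if i = b then (-1:ℝ) else 1) with hu
    have hW : ∀ t : Finset (Fin k), Walsh {a, b} (ptOf t) = ∏ i ∈ t, u i := by
      intro t
      rw [Walsh, Finset.prod_pair hab, hu, Finset.prod_mul_distrib, prod_ind, prod_ind]
      by_cases ha : a ∈ t <;> by_cases hb : b ∈ t <;> simp [ptOf, ha, hb]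
    have husum : ∑ i : Fin k, u i = (k:ℝ) - 4 := by
      have he : ∀ i : Fin k, u i
          = 1 - 2 * (if i = a then (1:ℝ) else 0) - 2 * (if i = b then (1:ℝ) else 0) := by
        intro i
        by_cases ha : i = a <;> by_cases hb : i = b
        · exact absurd (ha.symm.trans hb) hab
        · subst ha; simp [hu, hab, hb]; norm_num
        · subst hb; simp [hu, Ne.symm hab, ha]; norm_num
        · simp [hu, ha, hb]
      simp_rw [he]
      rw [Finset.sum_sub_distrib, Finset.sum_sub_distrib, Finset.sum_const,
        ← Finset.mul_sum, ← Finset.mul_sum, Finset.sum_ite_eq', Finset.sum_ite_eq']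
      simp [Finset.card_univ]
      ring
    have husq : ∑ i : Fin k, (u i)^2 = (k:ℝ) := by
      have he : ∀ i : Fin k, (u i)^2 = 1 := by
        intro i; by_cases ha : i = a <;> by_cases hb : i = b <;> simp [hu, ha, hb]
      simp_rw [he]
      simp [Finset.card_univ]
    have hsum2 := sum_pC2 (Finset.univ : Finset (Fin k)) u
    rw [husum, husq] at hsum2
    have h2 : 2 * LS k 2 (Walsh {a, b}) = ((k:ℝ)-4)^2 - (k:ℝ) := by
      rw [l2]
      simp_rw [hW]
      linear_combination hsum2
    have h1 : LS k 1 (Walsh {a, b}) = (k:ℝ) - 4 := by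
      rw [l1]
      simp_rw [hW, Finset.prod_singleton]
      exact husum
    have h0 : LS k 0 (Walsh {a, b}) = 1 := by
      rw [l0, hW]; simp
    have hk' : LS k k (Walsh {a, b}) = 1 := by
      rw [lk, hW, hu, Finset.prod_mul_distrib, prod_ind, prod_ind]
      simp
    have hT : TS k (Walsh {a, b}) = 0 := sum_walsh_ne _ ⟨a, by simp⟩
    constructor
    · rw [h0, h1, hk']; linear_combination h2
    · rw [hT, h0, h1]; linear_combination (-(2:ℝ)^k) * h2

end MyKey

section MyMain

open Finset

lemma key_span (k : ℕ) {φ : (Fin k → Bool) → ℝ} (hφ : φ ∈ BSpace k 2) :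
    ((k:ℝ)-1)*((k:ℝ)-2) * LS k 0 φ - 2*((k:ℝ)-2) * LS k 1 φ
        + 2 * LS k 2 φ - 2 * LS k k φ = 0
    ∧ 8 * TS k φ = 2^k * (((k:ℝ)^2-5*k+8) * LS k 0 φ
        + 2*(3-(k:ℝ)) * LS k 1 φ + 2 * LS k 2 φ) := by
  have hφ' : φ ∈ Submodule.span ℝ
      { f | ∃ L : Finset (Fin k), L.card ≤ 2 ∧ f = Walsh L } := hφ
  clear hφ
  induction hφ' using Submodule.span_induction with
  | mem f hf =>
      obtain ⟨L, hL2, rfl⟩ := hf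
      exact key_walsh k L hL2
  | zero =>
      constructor <;> simp [LS, TS]
  | add f g hf hg ihf ihg =>
      have eL : ∀ j, LS k j (f + g) = LS k j f + LS k j g := by
        intro j; simp [LS, Finset.sum_add_distrib]
      have eT : TS k (f + g) = TS k f + TS k g := by
        simp [TS, Finset.sum_add_distrib]
      constructor
      · rw [eL, eL, eL, eL]; linear_combination ihf.1 + ihg.1
      · rw [eT, eL, eL, eL]; linear_combination ihf.2 + ihg.2
  | smul a f hf ihf =>
      have eL : ∀ j, LS k j (a • f) = a * LS k j f := by
        intro j; simp [LS, Finset.mul_sum]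
      have eT : TS k (a • f) = a * TS k f := by
        simp [TS, Finset.mul_sum]
      constructor
      · rw [eL, eL, eL, eL]; linear_combination a * ihf.1
      · rw [eT, eL, eL, eL]; linear_combination a * ihf.2


end MyMain

/-- For `k ≥ 3`, the level set `W_{{1,k}}` is a set of uniqueness for `(B^k_2)_+`. -/
theorem stmt_1 (k : ℕ) (hk : 3 ≤ k) :
    IsUniqSet (BPlus k 2) (LevelSet k {1, k}) := by
  rintro φ ⟨hφB, hφpos⟩ hvan
  obtain ⟨hA, hB⟩ := key_span k hφB
  have hkR : (3:ℝ) ≤ (k:ℝ) := by exact_mod_cast hk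
  have h1 : LS k 1 φ = 0 := by
    refine Finset.sum_eq_zero fun x hx => ?_
    refine hvan x ?_
    have := (Finset.mem_filter.1 hx).2
    simp [LevelSet, this]
  have hkk : LS k k φ = 0 := by
    refine Finset.sum_eq_zero fun x hx => ?_
    refine hvan x ?_
    have := (Finset.mem_filter.1 hx).2
    simp [LevelSet, this]
  have h0 : 0 ≤ LS k 0 φ := Finset.sum_nonneg fun x _ => hφpos x
  have h2 : 0 ≤ LS k 2 φ := Finset.sum_nonneg fun x _ => hφpos x
  rw [h1, hkk] at hA
  rw [h1] at hB
  have hc : (0:ℝ) < ((k:ℝ)-1)*((k:ℝ)-2) := by nlinarith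
  have hC0 : ((k:ℝ)-1)*((k:ℝ)-2) * LS k 0 φ = 0 :=
    le_antisymm (by linarith) (mul_nonneg hc.le h0)
  have hL0 : LS k 0 φ = 0 := by
    rcases mul_eq_zero.1 hC0 with h | h
    · exact absurd h hc.ne'
    · exact h
  have hL2 : LS k 2 φ = 0 := by linarith
  rw [hL0, hL2] at hB
  have hT : TS k φ = 0 := by
    simp at hB
    linarith
  funext x
  have := (Finset.sum_eq_zero_iff_of_nonneg (fun x _ => hφpos x)).1 hT x (Finset.mem_univ x)
  simpa using this
end

section
/- Let k ≥ 4. The level set W_{{1,k−1}} (the points of X with exactly one or exactly k−1 coordinates equal to +1) is a set of uniqueness for (B^k_3)_+. -/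
open scoped symmDiff

section Aux

variable {k : ℕ}

private lemma walsh_mul_self (L : Finset (Fin k)) (y : Fin k → Bool) :
    Walsh L y * Walsh L y = 1 := by
  unfold Walsh
  rw [← Finset.prod_mul_distrib]
  refine Finset.prod_eq_one fun j _ => ?_
  cases y j <;> norm_num

private lemma walsh_mul (A B : Finset (Fin k)) (y : Fin k → Bool) :
    Walsh A y * Walsh B y = Walsh (A ∆ B) y := by
  have h1 : (A ∆ B) ∪ (A ∩ B) = A ∪ B := by
    simpa using symmDiff_sup_inf A B
  have hd : Disjoint (A ∆ B) (A ∩ B) := by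
    simpa using disjoint_symmDiff_inf A B
  have h3 : Walsh (A ∪ B) y = Walsh (A ∆ B) y * Walsh (A ∩ B) y := by
    rw [← h1]; exact Finset.prod_union hd
  calc Walsh A y * Walsh B y
      = Walsh (A ∪ B) y * Walsh (A ∩ B) y := (Finset.prod_union_inter).symm
    _ = Walsh (A ∆ B) y * (Walsh (A ∩ B) y * Walsh (A ∩ B) y) := by rw [h3]; ring
    _ = Walsh (A ∆ B) y := by rw [walsh_mul_self]; ring

private lemma sum_walsh_eq_zero {N : Finset (Fin k)} (hN : N.Nonempty) :
    ∑ y : Fin k → Bool, Walsh N y = 0 := by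
  obtain ⟨i, hi⟩ := hN
  set σ : (Fin k → Bool) → (Fin k → Bool) := fun y => Function.update y i (!(y i)) with hσ
  have hinv : Function.Involutive σ := by
    intro y; funext j
    by_cases h : j = i
    · subst h; simp [σ, Function.update]
    · simp [σ, Function.update, h]
  have hneg : ∀ y, Walsh N (σ y) = - Walsh N y := by
    intro y
    unfold Walsh
    rw [← Finset.mul_prod_erase N _ hi,
        ← Finset.mul_prod_erase N (fun j => if y j then (1:ℝ) else -1) hi]
    have h1 : ∀ j ∈ N.erase i,
        (if σ y j then (1:ℝ) else -1) = (if y j then (1:ℝ) else -1) := by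
      intro j hj
      have hne : j ≠ i := Finset.ne_of_mem_erase hj
      simp [σ, Function.update, hne]
    rw [Finset.prod_congr rfl h1]
    have h2 : (if σ y i then (1:ℝ) else -1) = -(if y i then (1:ℝ) else -1) := by
      simp only [σ, Function.update_self]
      cases y i <;> norm_num
    rw [h2]; ring
  have hsum : ∑ y : Fin k → Bool, Walsh N (σ y) = ∑ y : Fin k → Bool, Walsh N y :=
    Equiv.sum_comp (Function.Involutive.toPerm σ hinv) (Walsh N)
  have h2 : ∑ y : Fin k → Bool, Walsh N y = - ∑ y : Fin k → Bool, Walsh N y := by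
    nth_rewrite 1 [← hsum]
    simp only [hneg, Finset.sum_neg_distrib]
  linarith

private lemma walsh_mem_BSpace {q : ℕ} {L : Finset (Fin k)} (h : L.card ≤ q) :
    Walsh L ∈ BSpace k q :=
  Submodule.subset_span ⟨L, h, rfl⟩

private lemma BSpace_mono {p q : ℕ} (h : p ≤ q) : BSpace k p ≤ BSpace k q :=
  Submodule.span_mono (fun f hf => by
    obtain ⟨L, hL, hfe⟩ := hf
    exact ⟨L, hL.trans h, hfe⟩)

private lemma mul_walsh_mem {n : ℕ} {f : (Fin k → Bool) → ℝ} (hf : f ∈ BSpace k n) (i : Fin k) :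
    (fun y => f y * Walsh {i} y) ∈ BSpace k (n + 1) := by
  unfold BSpace at hf
  induction hf using Submodule.span_induction with
  | mem g hg =>
    obtain ⟨L, hL, rfl⟩ := hg
    have he : (fun y => Walsh L y * Walsh {i} y) = Walsh (L ∆ {i}) := by
      funext y; exact walsh_mul L {i} y
    rw [he]
    apply walsh_mem_BSpace
    have h1 : (L ∆ {i}) ⊆ L ∪ {i} := by
      simpa using (symmDiff_le_sup (a := L) (b := ({i} : Finset (Fin k))))
    calc (L ∆ {i}).card ≤ (L ∪ {i}).card := Finset.card_le_card h1
      _ ≤ L.card + 1 := by simpa using Finset.card_union_le L ({i} : Finset (Fin k))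
      _ ≤ n + 1 := by omega
  | zero =>
    have he : (fun y => (0 : (Fin k → Bool) → ℝ) y * Walsh {i} y) = 0 := by
      funext y; simp
    rw [he]; exact Submodule.zero_mem _
  | add x y hx hy ihx ihy =>
    have he : (fun z => (x + y) z * Walsh {i} z)
        = (fun z => x z * Walsh {i} z) + (fun z => y z * Walsh {i} z) := by
      funext z; simp [add_mul]
    rw [he]; exact Submodule.add_mem _ ihx ihy
  | smul a x hx ihx =>
    have he : (fun z => (a • x) z * Walsh {i} z) = a • (fun z => x z * Walsh {i} z) := by
      funext z; simp [mul_assoc]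
    rw [he]; exact Submodule.smul_mem _ a ihx

private lemma sum_walsh_singleton (y : Fin k → Bool) :
    ∑ i : Fin k, Walsh {i} y = 2 * (PosCount y : ℝ) - k := by
  have h1 : ∀ i, Walsh {i} y = (if y i = true then (2:ℝ) else 0) - 1 := by
    intro i; unfold Walsh; rw [Finset.prod_singleton]; cases y i <;> norm_num
  rw [Finset.sum_congr rfl (fun i _ => h1 i), Finset.sum_sub_distrib]
  have h2 : ∑ i : Fin k, (if y i = true then (2:ℝ) else 0)
      = 2 * (PosCount y : ℝ) := by
    have h3 : ∀ i : Fin k, (if y i = true then (2:ℝ) else 0)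
        = 2 * (if y i = true then (1:ℝ) else 0) := by
      intro i; cases y i <;> norm_num
    rw [Finset.sum_congr rfl (fun i _ => h3 i), ← Finset.mul_sum]
    congr 1
    rw [Finset.sum_boole]
    unfold PosCount
    norm_num
  rw [h2]
  simp [Finset.card_univ]

private lemma mul_factor_mem {n : ℕ} {f : (Fin k → Bool) → ℝ} (hf : f ∈ BSpace k n) (a : ℝ) :
    (fun y => f y * (2 * (PosCount y : ℝ) - a)) ∈ BSpace k (n + 1) := by
  have heq : (fun y => f y * (2 * (PosCount y : ℝ) - a))
      = ((k : ℝ) - a) • f + ∑ i : Fin k, (fun y => f y * Walsh {i} y) := by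
    funext y
    simp only [Pi.add_apply, Pi.smul_apply, smul_eq_mul, Finset.sum_apply]
    have h1 := sum_walsh_singleton (k := k) y
    have h2 : ∑ i : Fin k, f y * Walsh {i} y = f y * ∑ i : Fin k, Walsh {i} y :=
      (Finset.mul_sum _ _ _).symm
    rw [h2, h1]; ring
  rw [heq]
  exact Submodule.add_mem _
    (Submodule.smul_mem _ _ (BSpace_mono (Nat.le_succ n) hf))
    (Submodule.sum_mem _ (fun i _ => mul_walsh_mem hf i))

/-- The auxiliary product `∏_{r<n} (2·PosCount y − (5+2r))`. -/
private noncomputable def Gn (k n : ℕ) : (Fin k → Bool) → ℝ :=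
  fun y => ∏ r ∈ Finset.range n, (2 * (PosCount y : ℝ) - ((5 : ℝ) + 2 * (r : ℝ)))

private lemma Gn_mem (n : ℕ) : Gn k n ∈ BSpace k n := by
  induction n with
  | zero =>
    have he : Gn k 0 = Walsh (∅ : Finset (Fin k)) := by
      funext y; simp [Gn, Walsh]
    rw [he]; exact walsh_mem_BSpace (by simp)
  | succ n ih =>
    have he : Gn k (n+1)
        = fun y => Gn k n y * (2 * (PosCount y : ℝ) - ((5:ℝ) + 2 * (n:ℝ))) := by
      funext y; simp [Gn, Finset.prod_range_succ]
    rw [he]; exact mul_factor_mem ih _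

private lemma sum_mul_walsh_eq_zero {n : ℕ} {f : (Fin k → Bool) → ℝ} (hf : f ∈ BSpace k n)
    {M : Finset (Fin k)} (hM : n < M.card) :
    ∑ y : Fin k → Bool, f y * Walsh M y = 0 := by
  unfold BSpace at hf
  induction hf using Submodule.span_induction with
  | mem g hg =>
    obtain ⟨L, hL, rfl⟩ := hg
    rw [Finset.sum_congr rfl fun y _ => walsh_mul L M y]
    apply sum_walsh_eq_zero
    rw [Finset.nonempty_iff_ne_empty]
    intro hemp
    have hLM : L = M := by
      have : L ∆ M = (⊥ : Finset (Fin k)) := hemp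
      exact symmDiff_eq_bot.mp this
    rw [hLM] at hL; omega
  | zero => simp
  | add x y hx hy ihx ihy =>
    simp only [Pi.add_apply, add_mul, Finset.sum_add_distrib, ihx, ihy, add_zero]
  | smul a x hx ihx =>
    simp only [Pi.smul_apply, smul_eq_mul, mul_assoc, ← Finset.mul_sum, ihx, mul_zero]

private lemma poscount_le (y : Fin k → Bool) : PosCount y ≤ k := by
  unfold PosCount
  calc (Finset.univ.filter fun i => y i = true).card
      ≤ (Finset.univ : Finset (Fin k)).card := Finset.card_filter_le _ _
    _ = k := by simp

private lemma walsh_univ_eq (y : Fin k → Bool) :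
    Walsh (Finset.univ : Finset (Fin k)) y = (-1 : ℝ) ^ (k - PosCount y) := by
  unfold Walsh
  rw [Finset.prod_ite (fun _ => (1:ℝ)) (fun _ => (-1:ℝ)), Finset.prod_const,
    Finset.prod_const, one_pow, one_mul]
  congr 1
  have h := Finset.card_filter_add_card_filter_not
    (s := (Finset.univ : Finset (Fin k))) (p := fun i => y i = true)
  have hcard : (Finset.univ : Finset (Fin k)).card = k := by simp
  unfold PosCount
  omega

private lemma g_pos (hk : 4 ≤ k) (y : Fin k → Bool) (h1 : PosCount y ≠ 1)
    (h2 : PosCount y ≠ k - 1) :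
    0 < Walsh (Finset.univ : Finset (Fin k)) y * Gn k (k - 4) y := by
  set j := PosCount y with hj
  have hjk : j ≤ k := poscount_le y
  set n := k - 4 with hn
  set t := min n (j - 2) with ht
  have htn : t ≤ n := min_le_left _ _
  have hsplit : Gn k n y
      = (∏ r ∈ Finset.Ico 0 t, (2 * (j:ℝ) - ((5:ℝ) + 2 * (r:ℝ))))
        * (∏ r ∈ Finset.Ico t n, (2 * (j:ℝ) - ((5:ℝ) + 2 * (r:ℝ)))) := by
    unfold Gn
    rw [← hj, Finset.range_eq_Ico, Finset.prod_Ico_consecutive _ (Nat.zero_le t) htn]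
  have hP : 0 < ∏ r ∈ Finset.Ico 0 t, (2 * (j:ℝ) - ((5:ℝ) + 2 * (r:ℝ))) := by
    apply Finset.prod_pos
    intro r hr
    have hrt : r < t := (Finset.mem_Ico.mp hr).2
    have hr3 : r + 3 ≤ j := by omega
    have hr3' : (r:ℝ) + 3 ≤ (j:ℝ) := by exact_mod_cast hr3
    linarith
  have hQ : 0 < ∏ r ∈ Finset.Ico t n, (-(2 * (j:ℝ) - ((5:ℝ) + 2 * (r:ℝ)))) := by
    apply Finset.prod_pos
    intro r hr
    obtain ⟨hrt, hrn⟩ := Finset.mem_Ico.mp hr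
    have hjr : j ≤ r + 2 := by omega
    have hjr' : (j:ℝ) ≤ (r:ℝ) + 2 := by exact_mod_cast hjr
    linarith
  have hNeg : ∏ r ∈ Finset.Ico t n, (2 * (j:ℝ) - ((5:ℝ) + 2 * (r:ℝ)))
      = (-1:ℝ)^(n - t) * ∏ r ∈ Finset.Ico t n, (-(2 * (j:ℝ) - ((5:ℝ) + 2 * (r:ℝ)))) := by
    have hx : ∀ r ∈ Finset.Ico t n, (2 * (j:ℝ) - ((5:ℝ) + 2 * (r:ℝ)))
        = (-1) * (-(2 * (j:ℝ) - ((5:ℝ) + 2 * (r:ℝ)))) := by intro r _; ring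
    rw [Finset.prod_congr rfl hx, Finset.prod_mul_distrib, Finset.prod_const, Nat.card_Ico]
  have hW : Walsh (Finset.univ : Finset (Fin k)) y = (-1:ℝ)^(k - j) := walsh_univ_eq y
  have hparity : Even ((k - j) + (n - t)) := by
    rw [Nat.even_iff]; omega
  have hfinal : Walsh (Finset.univ : Finset (Fin k)) y * Gn k n y
      = ((-1:ℝ)^((k - j) + (n - t)))
        * ((∏ r ∈ Finset.Ico 0 t, (2 * (j:ℝ) - ((5:ℝ) + 2 * (r:ℝ))))
          * (∏ r ∈ Finset.Ico t n, (-(2 * (j:ℝ) - ((5:ℝ) + 2 * (r:ℝ)))))) := by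
    rw [hW, hsplit, hNeg, pow_add]; ring
  rw [hfinal, Even.neg_one_pow hparity, one_mul]
  exact mul_pos hP hQ

end Aux

/-- For `k ≥ 4`, the level set `W_{{1,k−1}}` is a set of uniqueness for `(B^k_3)_+`. -/
theorem stmt_2 (k : ℕ) (hk : 4 ≤ k) :
    IsUniqSet (BPlus k 3) (LevelSet k {1, k - 1}) := by
  rintro φ ⟨hmem, hpos⟩ hz
  set g : (Fin k → Bool) → ℝ :=
    fun y => Walsh (Finset.univ : Finset (Fin k)) y * Gn k (k - 4) y with hg
  have hzero : ∀ y : Fin k → Bool, (PosCount y = 1 ∨ PosCount y = k - 1) → φ y = 0 := by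
    intro y hy
    apply hz
    simp only [LevelSet, Set.mem_setOf_eq, Set.mem_insert_iff, Set.mem_singleton_iff]
    exact hy
  have hT : ∀ ψ, ψ ∈ BSpace k 3 → ∑ y : Fin k → Bool, g y * ψ y = 0 := by
    intro ψ hψ
    unfold BSpace at hψ
    induction hψ using Submodule.span_induction with
    | mem f hf =>
      obtain ⟨L, hL, rfl⟩ := hf
      have h1 : ∀ y, g y * Walsh L y
          = Gn k (k - 4) y * Walsh ((Finset.univ : Finset (Fin k)) ∆ L) y := by
        intro y
        rw [hg]
        dsimp only
        rw [← walsh_mul]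
        ring
      rw [Finset.sum_congr rfl fun y _ => h1 y]
      apply sum_mul_walsh_eq_zero (Gn_mem (k - 4))
      have hsd : (Finset.univ : Finset (Fin k)) ∆ L = Finset.univ \ L := by
        rw [symmDiff_def]
        have : L \ (Finset.univ : Finset (Fin k)) = ∅ := by
          simp [Finset.sdiff_eq_empty_iff_subset]
        simp only [Finset.sup_eq_union, this, Finset.union_empty]
      rw [hsd, Finset.card_sdiff_of_subset (Finset.subset_univ L), Finset.card_univ, Fintype.card_fin]
      omega
    | zero => simp
    | add x y hx hy ihx ihy =>
      simp only [Pi.add_apply, mul_add, Finset.sum_add_distrib, ihx, ihy, add_zero]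
    | smul a x hx ihx =>
      have he : ∀ y : Fin k → Bool, g y * (a • x) y = a * (g y * x y) := by
        intro y; simp [Pi.smul_apply]; ring
      rw [Finset.sum_congr rfl fun y _ => he y, ← Finset.mul_sum, ihx, mul_zero]
  have hterm : ∀ y ∈ (Finset.univ : Finset (Fin k → Bool)), 0 ≤ g y * φ y := by
    intro y _
    by_cases hy : PosCount y = 1 ∨ PosCount y = k - 1
    · rw [hzero y hy]; simp
    · push_neg at hy
      exact mul_nonneg (le_of_lt (g_pos hk y hy.1 hy.2)) (hpos y)
  have hall := (Finset.sum_eq_zero_iff_of_nonneg hterm).mp (hT φ hmem)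
  funext y
  show φ y = (0 : (Fin k → Bool) → ℝ) y
  rw [Pi.zero_apply]
  by_cases hy : PosCount y = 1 ∨ PosCount y = k - 1
  · exact hzero y hy
  · push_neg at hy
    have h0 := hall y (Finset.mem_univ y)
    rcases mul_eq_zero.mp h0 with h | h
    · exact absurd h (ne_of_gt (g_pos hk y hy.1 hy.2))
    · exact h
end

section
/- Let k ≥ 4. Then u(k,3) ≤ 2k, i.e., there exists a set of uniqueness for (B^k_3)_+ of cardinality at most 2k. -/
/-! The signed weight `μ = 1 + (k - 4) 2^(k-3) (δ₊ + δ₋) - 2^(k-3) 𝟙_W`, where `δ₊, δ₋` are the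
point masses at the two constant points and `W` is the level set of points with exactly one `+1`
or exactly one `-1` (`2k` points), is orthogonal to every Walsh function of degree at most `3`:
orthogonality to `w_∅` fixes the total mass, and the coefficient of `δ₊ + δ₋` is chosen to kill
the degree-`2` Walsh functions, while odd degrees cancel by the symmetry `x ↦ -x`. For `k ≥ 4`
the weight is positive off `W`, so for `φ ∈ (B^k_3)_+` vanishing on `W` the identity
`∑ μ φ = 0` is a sum of nonnegative terms, forcing `φ = 0` off `W` as well. -/

open Finset

section Walsh

variable {k : ℕ}

theorem sum_walsh (L : Finset (Fin k)) :
    ∑ x, Walsh L x = if L = ∅ then (2 : ℝ) ^ k else 0 := by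
  have hfactor : ∀ x : Fin k → Bool,
      Walsh L x = ∏ j, if j ∈ L then (if x j then (1 : ℝ) else -1) else 1 := fun x => by
    rw [Walsh, prod_ite_mem, univ_inter]
  rw [sum_congr rfl fun x _ => hfactor x,
    ← Fintype.prod_sum fun j (b : Bool) => if j ∈ L then (if b then (1 : ℝ) else -1) else 1]
  split_ifs with hL
  · simp [hL]
  · obtain ⟨i, hi⟩ := nonempty_iff_ne_empty.2 hL
    exact prod_eq_zero (mem_univ i) (by simp [hi])

theorem walsh_not (L : Finset (Fin k)) (x : Fin k → Bool) :
    Walsh L (fun j => !x j) = (-1) ^ L.card * Walsh L x := by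
  rw [Walsh, Walsh, ← prod_const, ← prod_mul_distrib]
  exact prod_congr rfl fun j _ => by cases x j <;> simp

theorem walsh_const_true (L : Finset (Fin k)) : Walsh L (fun _ => true) = 1 := by
  simp [Walsh]

theorem walsh_const_false (L : Finset (Fin k)) : Walsh L (fun _ => false) = (-1) ^ L.card := by
  simp [Walsh]

def onlyFalseAt (i : Fin k) : Fin k → Bool := fun j => j ≠ i

def onlyTrueAt (i : Fin k) : Fin k → Bool := fun j => !onlyFalseAt i j

theorem walsh_onlyFalseAt (L : Finset (Fin k)) (i : Fin k) :
    Walsh L (onlyFalseAt i) = if i ∈ L then -1 else 1 := by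
  rw [Walsh, ← prod_ite_eq' L i (fun _ => (-1 : ℝ))]
  exact prod_congr rfl fun j _ => by by_cases h : j = i <;> simp [onlyFalseAt, h]

theorem walsh_onlyTrueAt (L : Finset (Fin k)) (i : Fin k) :
    Walsh L (onlyTrueAt i) = (-1) ^ L.card * if i ∈ L then -1 else 1 := by
  unfold onlyTrueAt
  rw [walsh_not, walsh_onlyFalseAt]

theorem sum_ite_mem_neg_one_one (L : Finset (Fin k)) :
    ∑ i, (if i ∈ L then (-1 : ℝ) else 1) = k - 2 * L.card := by
  have hL : L.card ≤ k := by simpa using card_le_univ L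
  simp only [sum_ite, sum_const, filter_mem_eq_inter, univ_inter, filter_not, card_univ_sdiff,
    Fintype.card_fin, nsmul_eq_mul, Nat.cast_sub hL]
  ring

end Walsh

theorem isUniqSet_BPlus_of_dotProduct_walsh {k q : ℕ} {U : Set (Fin k → Bool)}
    (μ : (Fin k → Bool) → ℝ) (horth : ∀ L : Finset (Fin k), L.card ≤ q → μ ⬝ᵥ Walsh L = 0)
    (hpos : ∀ x ∉ U, 0 < μ x) : IsUniqSet (BPlus k q) U := by
  rintro φ ⟨hφB, hφ_nonneg⟩ hφU
  have horthφ : μ ⬝ᵥ φ = 0 := by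
    have hB : BSpace k q ≤ LinearMap.ker (dotProductBilin ℝ ℝ μ) := by
      rw [BSpace, Submodule.span_le]
      rintro _ ⟨L, hL, rfl⟩
      exact horth L hL
    exact hB hφB
  have hterm : ∀ x, 0 ≤ μ x * φ x := fun x => by
    by_cases hx : x ∈ U
    · simp [hφU x hx]
    · exact mul_nonneg (hpos x hx).le (hφ_nonneg x)
  have hterm_zero := (Fintype.sum_eq_zero_iff_of_nonneg hterm).1 horthφ
  funext x
  by_cases hx : x ∈ U
  · exact hφU x hx
  · exact (mul_eq_zero.1 (congrFun hterm_zero x)).resolve_left (hpos x hx).ne'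

def poleNeighbors (k : ℕ) : Finset (Fin k → Bool) :=
  univ.image onlyTrueAt ∪ univ.image onlyFalseAt

theorem card_poleNeighbors_le (k : ℕ) : (poleNeighbors k).card ≤ 2 * k := by
  calc (poleNeighbors k).card
      ≤ (univ.image (onlyTrueAt (k := k))).card + (univ.image onlyFalseAt).card :=
        card_union_le _ _
    _ ≤ k + k := by gcongr <;> exact card_image_le.trans_eq (card_fin k)
    _ = 2 * k := by ring

noncomputable def dualWeight (k : ℕ) : (Fin k → Bool) → ℝ :=
  1 + (((k : ℝ) - 4) * 2 ^ (k - 3)) • (Pi.single (fun _ => true) 1 + Pi.single (fun _ => false) 1)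
    - (2 : ℝ) ^ (k - 3) • ∑ i, (Pi.single (onlyTrueAt i) 1 + Pi.single (onlyFalseAt i) 1)

theorem dualWeight_dotProduct_walsh (k : ℕ) (L : Finset (Fin k)) :
    dualWeight k ⬝ᵥ Walsh L = (if L = ∅ then 2 ^ k else 0)
      + ((-1) ^ L.card + 1) * 2 ^ (k - 3) * (2 * L.card - 4) := by
  simp only [dualWeight, sub_dotProduct, add_dotProduct, smul_dotProduct, sum_dotProduct,
    single_dotProduct, one_dotProduct, one_mul, sum_walsh, walsh_const_true, walsh_const_false,
    walsh_onlyTrueAt, walsh_onlyFalseAt, ← add_one_mul, ← mul_sum, sum_ite_mem_neg_one_one,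
    smul_eq_mul]
  ring

theorem dualWeight_pos {k : ℕ} (hk : 4 ≤ k) {x : Fin k → Bool} (hx : x ∉ poleNeighbors k) :
    0 < dualWeight k x := by
  simp only [poleNeighbors, mem_union, mem_image, mem_univ, true_and, not_or, not_exists] at hx
  have hc : (0 : ℝ) ≤ ((k : ℝ) - 4) * 2 ^ (k - 3) :=
    mul_nonneg (by rw [sub_nonneg]; exact_mod_cast hk) (by positivity)
  simp only [dualWeight, Pi.sub_apply, Pi.add_apply, Pi.smul_apply, Finset.sum_apply,
    Pi.single_apply, fun i => Ne.symm (hx.1 i), fun i => Ne.symm (hx.2 i), Pi.one_apply,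
    smul_eq_mul, if_false, add_zero, sum_const_zero, mul_zero, sub_zero]
  split_ifs <;> linarith

theorem dualWeight_dotProduct_walsh_eq_zero {k : ℕ} (hk : 3 ≤ k) {L : Finset (Fin k)}
    (hL : L.card ≤ 3) : dualWeight k ⬝ᵥ Walsh L = 0 := by
  rw [dualWeight_dotProduct_walsh]
  obtain hL0 | hL_pos := Nat.eq_zero_or_pos L.card
  · have hpow : (2 : ℝ) ^ k = 2 ^ (k - 3) * 2 ^ 3 := by rw [← pow_add, Nat.sub_add_cancel hk]
    rw [if_pos (card_eq_zero.1 hL0), hL0, hpow]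
    ring
  · rw [if_neg (card_pos.1 hL_pos).ne_empty]
    interval_cases L.card <;> norm_num

/-- For `k ≥ 4`, `u(k,3) ≤ 2k`, i.e., there is a set of uniqueness for
`(B^k_3)_+` of cardinality at most `2k`. -/
theorem stmt_3 (k : ℕ) (hk : 4 ≤ k) :
    uMin k 3 ≤ 2 * k ∧
      ∃ U : Set (Fin k → Bool), U.ncard ≤ 2 * k ∧ IsUniqSet (BPlus k 3) U := by
  have hU : IsUniqSet (BPlus k 3) (poleNeighbors k : Set (Fin k → Bool)) :=
    isUniqSet_BPlus_of_dotProduct_walsh (dualWeight k)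
      (fun _ hL => dualWeight_dotProduct_walsh_eq_zero (by omega) hL)
      (fun _ hx => dualWeight_pos hk hx)
  have hcard : (poleNeighbors k : Set (Fin k → Bool)).ncard ≤ 2 * k := by
    rw [Set.ncard_coe_finset]
    exact card_poleNeighbors_le k
  have hmin : uMin k 3 ≤ (poleNeighbors k : Set (Fin k → Bool)).ncard := Nat.sInf_le ⟨_, rfl, hU⟩
  exact ⟨hmin.trans hcard, _, hcard, hU⟩
end

section
/- Let k ≥ 1. The two-point set {(−1,…,−1), (+1,…,+1)} is a set of uniqueness for (B^k_1)_+, and no subset of X of cardinality at most 1 is a set of uniqueness for (B^k_1)_+; consequently u(k,1) = 2. -/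
lemma key7 {k : ℕ} (hk : 1 ≤ k) (φ : (Fin k → Bool) → ℝ) (hφ : φ ∈ BSpace k 1)
    (x : Fin k → Bool) :
    φ x + φ (fun i => !x i) = φ (fun _ => false) + φ (fun _ => true) := by
  have : Nonempty (Fin k) := ⟨⟨0, hk⟩⟩
  induction hφ using Submodule.span_induction with
  | mem f hf =>
    obtain ⟨L, hL, rfl⟩ := hf
    obtain ⟨a, ha⟩ := Finset.card_le_one_iff_subset_singleton.mp hL
    rcases Finset.subset_singleton_iff.mp ha with rfl | rfl
    · simp [Walsh]
    · simp only [Walsh, Finset.prod_singleton]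
      rcases Bool.dichotomy (x a) with h | h <;> simp [h]
  | zero => simp
  | add f g _ _ hf hg => simp only [Pi.add_apply]; linarith
  | smul c f _ hf =>
    simp only [Pi.smul_apply, smul_eq_mul]; rw [← mul_add, ← mul_add, hf]

noncomputable def sg7 (b : Bool) : ℝ := if b then 1 else -1

noncomputable def Phi7 {k : ℕ} (u : Fin k → Bool) : (Fin k → Bool) → ℝ :=
  fun x => ∑ i : Fin k, (1 - sg7 (u i) * sg7 (x i))

lemma Phi7_mem {k : ℕ} (u : Fin k → Bool) : Phi7 u ∈ BSpace k 1 := by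
  have h : Phi7 u =
      ∑ i : Fin k, (Walsh (∅ : Finset (Fin k)) - sg7 (u i) • Walsh {i}) := by
    funext x
    rw [Finset.sum_apply]
    refine Finset.sum_congr rfl fun i _ => ?_
    rcases Bool.dichotomy (u i) with h | h <;> rcases Bool.dichotomy (x i) with h' | h' <;>
      simp [Phi7, Walsh, sg7, h, h']
  rw [h]
  refine Submodule.sum_mem _ fun i _ => Submodule.sub_mem _ ?_ ?_
  · exact Submodule.subset_span ⟨∅, by simp⟩
  · exact Submodule.smul_mem _ _ (Submodule.subset_span ⟨{i}, by simp⟩)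

lemma Phi7_nonneg {k : ℕ} (u : Fin k → Bool) (x : Fin k → Bool) : 0 ≤ Phi7 u x := by
  refine Finset.sum_nonneg fun i _ => ?_
  rcases Bool.dichotomy (u i) with h | h <;> rcases Bool.dichotomy (x i) with h' | h' <;>
    simp [sg7, h, h']

lemma Phi7_self {k : ℕ} (u : Fin k → Bool) : Phi7 u u = 0 := by
  refine Finset.sum_eq_zero fun i _ => ?_
  rcases Bool.dichotomy (u i) with h | h <;> simp [sg7, h]

lemma Phi7_flip {k : ℕ} (u : Fin k → Bool) : Phi7 u (fun i => !u i) = 2 * k := by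
  have : ∀ i : Fin k, (1 - sg7 (u i) * sg7 (!u i)) = 2 := by
    intro i; rcases Bool.dichotomy (u i) with h | h <;> simp [sg7, h] <;> norm_num
  simp [Phi7, this, Finset.sum_const, mul_comm]


/-- For `k ≥ 1`, the two-point set `{(−1,…,−1),(+1,…,+1)}` is a set of
uniqueness for `(B^k_1)_+`, no subset of cardinality at most 1 is, and `u(k,1) = 2`. -/
theorem stmt_7 (k : ℕ) (hk : 1 ≤ k) :
    IsUniqSet (BPlus k 1) ({fun _ => false, fun _ => true} : Set (Fin k → Bool)) ∧
      (∀ U : Set (Fin k → Bool), U.ncard ≤ 1 → ¬ IsUniqSet (BPlus k 1) U) ∧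
      uMin k 1 = 2 := by
  have part1 : IsUniqSet (BPlus k 1)
      ({fun _ => false, fun _ => true} : Set (Fin k → Bool)) := by
    rintro φ ⟨hmem, hpos⟩ h0
    have ha := h0 (fun _ => false) (Set.mem_insert _ _)
    have hb := h0 (fun _ => true) (Set.mem_insert_of_mem _ rfl)
    funext x
    have h := key7 hk φ hmem x
    have h1 := hpos x
    have h2 := hpos (fun i => !x i)
    show φ x = 0
    linarith
  have part2 : ∀ U : Set (Fin k → Bool), U.ncard ≤ 1 → ¬ IsUniqSet (BPlus k 1) U := by
    intro U hU hUniq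
    obtain ⟨u, hu⟩ : ∃ u, U ⊆ {u} := by
      rcases Set.eq_empty_or_nonempty U with rfl | ⟨v, hv⟩
      · exact ⟨fun _ => true, by simp⟩
      · refine ⟨v, fun w hw => ?_⟩
        by_contra hne
        have hsub : ({v, w} : Set (Fin k → Bool)) ⊆ U := by
          rintro y (rfl | rfl); exacts [hv, hw]
        have h2 : ({v, w} : Set (Fin k → Bool)).ncard = 2 :=
          Set.ncard_pair (fun h => hne (h ▸ rfl))
        have := Set.ncard_le_ncard hsub (Set.toFinite U)
        omega
    have hzero := hUniq (Phi7 u) ⟨Phi7_mem u, Phi7_nonneg u⟩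
      (fun x hx => by rw [hu hx]; exact Phi7_self u)
    have hev := congrFun hzero (fun i => !u i)
    rw [Phi7_flip] at hev
    have : (1 : ℝ) ≤ k := by exact_mod_cast hk
    simp only [Pi.zero_apply] at hev
    linarith
  refine ⟨part1, part2, ?_⟩
  have hne : (fun _ => false : Fin k → Bool) ≠ (fun _ => true) := by
    intro h
    have := congrFun h ⟨0, hk⟩
    simp at this
  have hmem2 : 2 ∈ { n | ∃ U : Set (Fin k → Bool),
      U.ncard = n ∧ IsUniqSet (BPlus k 1) U } :=
    ⟨{fun _ => false, fun _ => true}, Set.ncard_pair hne, part1⟩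
  refine le_antisymm (Nat.sInf_le hmem2) (le_csInf ⟨2, hmem2⟩ ?_)
  rintro n ⟨U, hcard, hU⟩
  by_contra h
  push_neg at h
  exact part2 U (by omega) hU
end

section
/- Let k ≥ 3. Then u(k,2) ≤ k + 1, i.e., there exists a set of uniqueness for (B^k_2)_+ of cardinality at most k+1. -/
/-!
A signed measure `ν` on the cube that annihilates every Walsh function of degree at most `2`
and is strictly positive off `U` certifies that `U` is a set of uniqueness for `(B^k_2)_+`:
for `φ ≥ 0` in `B^k_2` vanishing on `U`, the sum `∑ ν x φ x = 0` has nonnegative terms, so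
`φ = 0` wherever `ν > 0`. For `U = {𝟙} ∪ {e₁, …, e_k}` (`e_i` the point with the single
`+1` in coordinate `i`) such a measure is
`ν = 4 + 2^k ((k - 3) δ_{-𝟙} - δ_𝟙 - ∑ᵢ δ_{eᵢ})`, positive off `U` as soon as `k ≥ 3`.
Indeed `w_L(-𝟙) = (-1)^|L|`, `w_L(𝟙) = 1` and `∑ᵢ w_L(eᵢ) = (-1)^|L| (k - 2|L|)`, so
`∑ ν w_L = 4 ∑ w_L + 2^k ((-1)^|L| (2|L| - 3) - 1)`, which vanishes for `|L| = 0, 1, 2`.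
In the encoding `true ↔ +1`, the points `-𝟙` and `𝟙` are `⊥` and `⊤`.
-/

open Finset

section UnitVec

variable {k : ℕ}

def unitVec (i : Fin k) : Fin k → Bool := fun j => decide (j = i)

lemma unitVec_injective : Function.Injective (unitVec (k := k)) := by
  intro i j h
  simpa [unitVec] using congrFun h i

end UnitVec

namespace Walsh

variable {k : ℕ}

lemma apply_top (L : Finset (Fin k)) : Walsh L ⊤ = 1 := by
  simp [Walsh]

lemma apply_bot (L : Finset (Fin k)) : Walsh L ⊥ = (-1) ^ L.card := by
  simp [Walsh]

lemma apply_unitVec (L : Finset (Fin k)) (i : Fin k) :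
    Walsh L (unitVec i) = (-1) ^ L.card * if i ∈ L then -1 else 1 := by
  have hsign : ∀ j, (if unitVec i j then (1 : ℝ) else -1) = -1 * if i = j then -1 else 1 := by
    intro j
    by_cases h : i = j <;> simp [unitVec, h, eq_comm]
  simp only [Walsh, hsign, prod_mul_distrib, prod_const, prod_ite_eq]

lemma sum_apply_unitVec (L : Finset (Fin k)) :
    ∑ i, Walsh L (unitVec i) = (-1) ^ L.card * (k - 2 * L.card) := by
  have hsign : ∀ i, (if i ∈ L then (-1 : ℝ) else 1) = 1 - 2 * if i ∈ L then 1 else 0 := by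
    intro i
    split_ifs <;> ring
  simp [apply_unitVec, ← mul_sum, hsign, sum_sub_distrib, mul_comm]

lemma sum_eq_zero {L : Finset (Fin k)} (hL : L.Nonempty) : ∑ x, Walsh L x = 0 := by
  obtain ⟨a, ha⟩ := hL
  have hprod : ∀ x, Walsh L x = ∏ j, if j ∈ L then (if x j then (1 : ℝ) else -1) else 1 := by
    intro x
    rw [prod_ite_mem, univ_inter]
    rfl
  simp only [hprod]
  rw [← Fintype.prod_sum fun j (b : Bool) => if j ∈ L then (if b then (1 : ℝ) else -1) else 1]
  exact prod_eq_zero (mem_univ a) (by simp [ha])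

end Walsh

section Uniqueness

variable {k q : ℕ}

lemma dotProduct_eq_zero_of_mem_bSpace {ν φ : (Fin k → Bool) → ℝ}
    (hν : ∀ L : Finset (Fin k), L.card ≤ q → ν ⬝ᵥ Walsh L = 0) (hφ : φ ∈ BSpace k q) :
    ν ⬝ᵥ φ = 0 := by
  induction hφ using Submodule.span_induction with
  | mem f hf =>
    obtain ⟨L, hL, rfl⟩ := hf
    exact hν L hL
  | zero => exact dotProduct_zero ν
  | add f g _ _ hf hg => rw [dotProduct_add, hf, hg, add_zero]
  | smul c f _ hf => rw [dotProduct_smul, hf, smul_zero]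

theorem isUniqSet_bPlus_of_dotProduct_walsh {U : Set (Fin k → Bool)} (ν : (Fin k → Bool) → ℝ)
    (hν : ∀ L : Finset (Fin k), L.card ≤ q → ν ⬝ᵥ Walsh L = 0) (hpos : ∀ x ∉ U, 0 < ν x) :
    IsUniqSet (BPlus k q) U := by
  rintro φ ⟨hφ, hφ_nonneg⟩ hφU
  have horth := dotProduct_eq_zero_of_mem_bSpace hν hφ
  have hterm_nonneg : ∀ x ∈ univ, 0 ≤ ν x * φ x := by
    intro x _
    by_cases hx : x ∈ U
    · simp [hφU x hx]
    · exact mul_nonneg (hpos x hx).le (hφ_nonneg x)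
  have hterm_zero := (sum_eq_zero_iff_of_nonneg hterm_nonneg).mp horth
  funext x
  by_cases hx : x ∈ U
  · exact hφU x hx
  · exact (mul_eq_zero.mp (hterm_zero x (mem_univ x))).resolve_left (hpos x hx).ne'

end Uniqueness

open Walsh

noncomputable def degreeTwoDualWeight (k : ℕ) (x : Fin k → Bool) : ℝ :=
  4 + 2 ^ k * (((k : ℝ) - 3) * (if x = ⊥ then 1 else 0) - (if x = ⊤ then 1 else 0)
    - ∑ i, if x = unitVec i then 1 else 0)

lemma degreeTwoDualWeight_dotProduct (k : ℕ) (f : (Fin k → Bool) → ℝ) :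
    degreeTwoDualWeight k ⬝ᵥ f =
      4 * ∑ x, f x + 2 ^ k * (((k : ℝ) - 3) * f ⊥ - f ⊤ - ∑ i, f (unitVec i)) := by
  simp only [dotProduct, degreeTwoDualWeight, add_mul, mul_sub, sub_mul, sum_add_distrib,
    sum_sub_distrib, sum_mul, mul_sum, ite_mul, zero_mul, mul_ite, mul_zero,
    sum_ite_eq']
  rw [sum_comm]
  simp [mul_assoc]

lemma degreeTwoDualWeight_dotProduct_walsh {k : ℕ} {L : Finset (Fin k)} (hL : L.card ≤ 2) :
    degreeTwoDualWeight k ⬝ᵥ Walsh L = 0 := by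
  rw [degreeTwoDualWeight_dotProduct, apply_bot, apply_top, sum_apply_unitVec]
  obtain hL0 | hLne := L.eq_empty_or_nonempty
  · subst hL0
    have hsum : ∑ x : Fin k → Bool, Walsh ∅ x = 2 ^ k := by simp [Walsh]
    rw [hsum, card_empty]
    ring
  · have hcard_pos := hLne.card_pos
    rw [sum_eq_zero hLne]
    interval_cases L.card <;> first | omega | ring

lemma degreeTwoDualWeight_pos {k : ℕ} (hk : 3 ≤ k) {x : Fin k → Bool}
    (hx : x ∉ insert ⊤ (Set.range unitVec)) : 0 < degreeTwoDualWeight k x := by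
  have hk' : (3 : ℝ) ≤ k := by exact_mod_cast hk
  have htop : x ≠ ⊤ := fun h => hx (Or.inl h)
  have hunit : ∀ i, x ≠ unitVec i := fun i h => hx (Or.inr ⟨i, h.symm⟩)
  simp only [degreeTwoDualWeight, htop, hunit, if_false, sum_const_zero, sub_zero]
  split_ifs <;> positivity

/-- For `k ≥ 3`, `u(k,2) ≤ k + 1`, i.e., there is a set of uniqueness for
`(B^k_2)_+` of cardinality at most `k + 1`. -/
theorem stmt_8 (k : ℕ) (hk : 3 ≤ k) :
    uMin k 2 ≤ k + 1 ∧
      ∃ U : Set (Fin k → Bool), U.ncard ≤ k + 1 ∧ IsUniqSet (BPlus k 2) U := by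
  set U : Set (Fin k → Bool) := insert ⊤ (Set.range unitVec)
  have hcard : U.ncard ≤ k + 1 := by
    calc U.ncard ≤ (Set.range unitVec).ncard + 1 := Set.ncard_insert_le _ _
      _ = k + 1 := by rw [Set.ncard_range_of_injective unitVec_injective, Nat.card_fin]
  have huniq : IsUniqSet (BPlus k 2) U :=
    isUniqSet_bPlus_of_dotProduct_walsh _ (fun _ => degreeTwoDualWeight_dotProduct_walsh)
      (fun _ => degreeTwoDualWeight_pos hk)
  have hmin : uMin k 2 ≤ U.ncard := Nat.sInf_le ⟨U, rfl, huniq⟩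
  exact ⟨hmin.trans hcard, U, hcard, huniq⟩
end

section
/- Let 0 ≤ q ≤ k. Every set of uniqueness U for (B^k_q)_+ intersects every (k−q)-subcube of X; consequently g(k,q) ≤ u(k,q). -/
noncomputable def sgn' (b : Bool) : ℝ := if b then 1 else -1

lemma phi_mem {k : ℕ} (q : ℕ) (F : Finset (Fin k)) (ε : Fin k → Bool) (hF : F.card = q) :
    (fun x => ∏ i ∈ F, (sgn' (x i) * sgn' (ε i) + 1)) ∈ BSpace k q := by
  have hrw : (fun x : Fin k → Bool => ∏ i ∈ F, (sgn' (x i) * sgn' (ε i) + 1))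
      = ∑ t ∈ F.powerset, (∏ i ∈ t, sgn' (ε i)) • Walsh t := by
    funext x
    rw [Finset.sum_apply, Finset.prod_add]
    refine Finset.sum_congr rfl fun t ht => ?_
    simp only [Finset.prod_const_one, mul_one, Finset.prod_mul_distrib, Pi.smul_apply,
      smul_eq_mul, Walsh, sgn']
    ring
  rw [hrw]
  refine Submodule.sum_mem _ fun t ht => Submodule.smul_mem _ _ ?_
  exact Submodule.subset_span ⟨t, by
    simpa [hF] using Finset.card_le_card (Finset.mem_powerset.mp ht), rfl⟩

theorem stmt11_main {k : ℕ} (q : ℕ) (U : Set (Fin k → Bool)) (hU : IsUniqSet (BPlus k q) U)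
    (F : Finset (Fin k)) (ε : Fin k → Bool) (hF : F.card = q) :
    (U ∩ Subcube F ε).Nonempty := by
  by_contra h
  rw [Set.not_nonempty_iff_eq_empty] at h
  set φ : (Fin k → Bool) → ℝ := fun x => ∏ i ∈ F, (sgn' (x i) * sgn' (ε i) + 1) with hφ
  have hmem : φ ∈ BPlus k q := by
    refine ⟨phi_mem q F ε hF, fun x => Finset.prod_nonneg fun i _ => ?_⟩
    rcases Bool.eq_false_or_eq_true (x i) with h1 | h1 <;>
      rcases Bool.eq_false_or_eq_true (ε i) with h2 | h2 <;> simp [sgn', h1, h2] <;> norm_num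
  have hzero : ∀ x ∈ U, φ x = 0 := by
    intro x hx
    have hxn : x ∉ Subcube F ε := fun hc =>
      Set.eq_empty_iff_forall_notMem.mp h x ⟨hx, hc⟩
    simp only [Subcube, Set.mem_setOf_eq, not_forall] at hxn
    obtain ⟨i, hiF, hne⟩ := hxn
    refine Finset.prod_eq_zero hiF ?_
    rcases Bool.eq_false_or_eq_true (x i) with h1 | h1 <;>
      rcases Bool.eq_false_or_eq_true (ε i) with h2 | h2 <;>
      simp_all [sgn']
  have h0 := hU φ hmem hzero
  have : φ ε = 0 := by rw [h0]; rfl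
  have hval : φ ε = 2 ^ q := by
    rw [hφ]
    simp only
    rw [show ∏ i ∈ F, (sgn' (ε i) * sgn' (ε i) + 1) = ∏ i ∈ F, (2:ℝ) from
      Finset.prod_congr rfl fun i _ => by
        rcases Bool.eq_false_or_eq_true (ε i) with h2 | h2 <;> simp [sgn', h2] <;> norm_num]
    simp [hF]
  rw [hval] at this
  exact absurd this (by positivity)

/-- For `0 ≤ q ≤ k`, every set of uniqueness for `(B^k_q)_+` intersects every
`(k−q)`-subcube; consequently `g(k,q) ≤ u(k,q)`. -/
theorem stmt_11 (k q : ℕ) (hqk : q ≤ k) :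
    (∀ U : Set (Fin k → Bool), IsUniqSet (BPlus k q) U →
        ∀ (F : Finset (Fin k)) (ε : Fin k → Bool), F.card = q →
          (U ∩ Subcube F ε).Nonempty) ∧
      gMin k q ≤ uMin k q := by
  constructor
  · exact fun U hU F ε hF => stmt11_main q U hU F ε hF
  · have hne : { n | ∃ U : Set (Fin k → Bool), U.ncard = n ∧ IsUniqSet (BPlus k q) U }.Nonempty := by
      refine ⟨(Set.univ : Set (Fin k → Bool)).ncard, Set.univ, rfl, ?_⟩
      intro φ hφ hz
      funext x
      exact hz x (Set.mem_univ x)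
    have hmemInf := Nat.sInf_mem hne
    obtain ⟨U, hcard, hUniq⟩ := hmemInf
    exact Nat.sInf_le ⟨U, hcard, fun F ε hF => stmt11_main q U hUniq F ε hF⟩
end

section
/- Let k ≥ 2 and for 0 ≤ j ≤ k define P_j^{(y)} = C(k−2, j−1) / (C(k−2, j) + C(k−2, j−1) + C(k−2, j−2)), with the convention C(n,r) = 0 for r < 0 or r > n. Then P_j^{(y)} < P_{j+1}^{(y)} whenever 0 ≤ j and 2(j+1) ≤ k, and P_j^{(y)} > P_{j+1}^{(y)} whenever 2j ≥ k + 2 and j + 1 ≤ k. -/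
lemma keyE (m j a b c d : ℤ)
    (h1 : c*(j+1) = b*(m-j)) (h2 : b*j = a*(m+1-j)) (h3 : a*(j-1) = d*(m+2-j)) :
    (b*b + b*d - a*c - a*a) * (j*j*(j+1)*(m+2-j)) = a*a*((m+2)*(m+1)*(m+1-2*j)) := by
  linear_combination
    ((j+1)*(m+2-j)*(b*j + a*(m+1-j)) + a*(j-1)*j*(j+1) - a*(m-j)*j*(m+2-j)) * h2
    + (-(b*j*j*(j+1))) * h3
    + (-(a*j*j*(m+2-j))) * h1

lemma key_lt (m j a b c d : ℤ) (hj : 1 ≤ j) (hm : 2*j ≤ m)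
    (ha : 1 ≤ a)
    (h1 : c*(j+1) = b*(m-j)) (h2 : b*j = a*(m+1-j)) (h3 : a*(j-1) = d*(m+2-j)) :
    a*c + a*a < b*b + b*d := by
  have E := keyE m j a b c d h1 h2 h3
  have hR : (0:ℤ) < a*a*((m+2)*(m+1)*(m+1-2*j)) := by
    apply mul_pos (by positivity)
    exact mul_pos (mul_pos (by linarith) (by linarith)) (by linarith)
  have hM : (0:ℤ) < j*j*(j+1)*(m+2-j) :=
    mul_pos (mul_pos (mul_pos (by linarith) (by linarith)) (by linarith)) (by linarith)
  nlinarith [mul_pos hM hR]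

lemma key_gt (m j a b c d : ℤ) (hj : m+4 ≤ 2*j) (hjm : j ≤ m+1)
    (ha : 1 ≤ a)
    (h1 : c*(j+1) = b*(m-j)) (h2 : b*j = a*(m+1-j)) (h3 : a*(j-1) = d*(m+2-j)) :
    b*b + b*d < a*c + a*a := by
  have E := keyE m j a b c d h1 h2 h3
  have hR : a*a*((m+2)*(m+1)*(m+1-2*j)) < 0 := by
    apply mul_neg_of_pos_of_neg (by positivity)
    apply mul_neg_of_pos_of_neg
    · exact mul_pos (by linarith) (by linarith)
    · linarith
  have hM : (0:ℤ) < j*j*(j+1)*(m+2-j) :=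
    mul_pos (mul_pos (mul_pos (by linarith) (by linarith)) (by linarith)) (by linarith)
  nlinarith [mul_pos hM (neg_pos.mpr hR)]

lemma Cb_succ (n : ℕ) (r : ℤ) : (Cb n (r+1) : ℤ) * (r+1) = (Cb n r : ℤ) * (n - r) := by
  rcases lt_trichotomy r (-1) with h | h | h
  · have h1 : r + 1 < 0 := by linarith
    have h2 : r < 0 := by linarith
    simp [Cb, h1, h2]
  · subst h; simp [Cb]
  · have hr : 0 ≤ r := by linarith
    have hr1 : ¬ (r + 1 < 0) := by linarith
    have hr0 : ¬ (r < 0) := by linarith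
    rw [Cb, Cb, if_neg hr1, if_neg hr0]
    obtain ⟨t, rfl⟩ : ∃ t : ℕ, r = (t : ℤ) := ⟨r.toNat, (Int.toNat_of_nonneg hr).symm⟩
    rcases le_or_gt (t+1) n with hle | hlt
    · have key := Nat.choose_succ_right_eq n t
      have : ((t:ℤ)+1).toNat = t + 1 := by omega
      rw [this, Int.toNat_natCast]
      have hnt : ((n - t : ℕ) : ℤ) = (n : ℤ) - t := by omega
      have := congrArg (fun x : ℕ => (x : ℤ)) key
      push_cast [hnt] at this ⊢
      linarith [this]
    · have h1 : n.choose (t+1) = 0 := Nat.choose_eq_zero_of_lt hlt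
      have : ((t:ℤ)+1).toNat = t + 1 := by omega
      rw [this, Int.toNat_natCast, h1]
      rcases Nat.lt_or_ge n t with h2 | h2
      · rw [Nat.choose_eq_zero_of_lt h2]; ring
      · have : t = n := by omega
        subst this; simp

lemma Cb_pos (n : ℕ) (r : ℤ) (h0 : 0 ≤ r) (h1 : r ≤ n) : 0 < Cb n r := by
  rw [Cb, if_neg (by linarith)]
  exact Nat.choose_pos (by omega)

/-- With `P_j^{(y)} = C(k−2,j−1)/(C(k−2,j)+C(k−2,j−1)+C(k−2,j−2))`,
`P_j^{(y)} < P_{j+1}^{(y)}` whenever `2(j+1) ≤ k`, and `P_j^{(y)} > P_{j+1}^{(y)}` whenever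
`2j ≥ k+2` and `j+1 ≤ k`. -/
theorem stmt_16 (k : ℕ) (hk : 2 ≤ k)
    (P : ℕ → ℝ)
    (hP : ∀ j : ℕ, P j = (Cb (k - 2) ((j : ℤ) - 1) : ℝ) /
      (Cb (k - 2) (j : ℤ) + Cb (k - 2) ((j : ℤ) - 1) + Cb (k - 2) ((j : ℤ) - 2))) :
    (∀ j : ℕ, 2 * (j + 1) ≤ k → P j < P (j + 1)) ∧
    (∀ j : ℕ, k + 2 ≤ 2 * j → j + 1 ≤ k → P (j + 1) < P j) := by
  set m := k - 2 with hmdef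
  have hkm : k = m + 2 := by omega
  have main : ∀ j : ℕ, 1 ≤ j → j ≤ m + 1 →
      (((Cb m ((j:ℤ)-1) : ℤ)*(Cb m ((j:ℤ)+1)) + (Cb m ((j:ℤ)-1))*(Cb m ((j:ℤ)-1))
        < (Cb m (j:ℤ))*(Cb m (j:ℤ)) + (Cb m (j:ℤ))*(Cb m ((j:ℤ)-2))
        → P j < P (j+1)) ∧
      ((Cb m (j:ℤ) : ℤ)*(Cb m (j:ℤ)) + (Cb m (j:ℤ))*(Cb m ((j:ℤ)-2))
        < (Cb m ((j:ℤ)-1))*(Cb m ((j:ℤ)+1)) + (Cb m ((j:ℤ)-1))*(Cb m ((j:ℤ)-1))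
        → P (j+1) < P j)) := by
    intro j hj1 hjm1
    have e1 : ((j+1:ℕ):ℤ) - 1 = (j:ℤ) := by push_cast; ring
    have e2 : ((j+1:ℕ):ℤ) = (j:ℤ)+1 := by push_cast; ring
    have e3 : ((j+1:ℕ):ℤ) - 2 = (j:ℤ)-1 := by push_cast; ring
    have hPj := hP j
    have hPj1 := hP (j+1)
    rw [e1, e3, e2] at hPj1
    have haN : 0 < Cb m ((j:ℤ)-1) := by
      apply Cb_pos
      · omega
      · omega
    have hD1 : (0:ℝ) < (Cb m (j:ℤ) : ℝ) + Cb m ((j:ℤ)-1) + Cb m ((j:ℤ)-2) := by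
      have : (0:ℝ) < (Cb m ((j:ℤ)-1) : ℝ) := by exact_mod_cast haN
      positivity
    have hD2 : (0:ℝ) < (Cb m ((j:ℤ)+1) : ℝ) + Cb m (j:ℤ) + Cb m ((j:ℤ)-1) := by
      have : (0:ℝ) < (Cb m ((j:ℤ)-1) : ℝ) := by exact_mod_cast haN
      positivity
    constructor
    · intro hkey
      rw [hPj, hPj1, div_lt_div_iff₀ hD1 hD2]
      have hzz : (Cb m ((j:ℤ)-1) : ℤ) * (Cb m ((j:ℤ)+1) + Cb m (j:ℤ) + Cb m ((j:ℤ)-1))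
          < (Cb m (j:ℤ) : ℤ) * (Cb m (j:ℤ) + Cb m ((j:ℤ)-1) + Cb m ((j:ℤ)-2)) := by
        nlinarith [hkey]
      exact_mod_cast hzz
    · intro hkey
      rw [hPj, hPj1, div_lt_div_iff₀ hD2 hD1]
      have hzz : (Cb m (j:ℤ) : ℤ) * (Cb m (j:ℤ) + Cb m ((j:ℤ)-1) + Cb m ((j:ℤ)-2))
          < (Cb m ((j:ℤ)-1) : ℤ) * (Cb m ((j:ℤ)+1) + Cb m (j:ℤ) + Cb m ((j:ℤ)-1)) := by
        nlinarith [hkey]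
      exact_mod_cast hzz
  have ident : ∀ j : ℕ, 1 ≤ j →
      ((Cb m ((j:ℤ)+1) : ℤ) * ((j:ℤ)+1) = (Cb m (j:ℤ)) * ((m:ℤ) - j)) ∧
      ((Cb m (j:ℤ) : ℤ) * (j:ℤ) = (Cb m ((j:ℤ)-1)) * ((m:ℤ)+1-j)) ∧
      ((Cb m ((j:ℤ)-1) : ℤ) * ((j:ℤ)-1) = (Cb m ((j:ℤ)-2)) * ((m:ℤ)+2-j)) := by
    intro j hj1
    refine ⟨Cb_succ m (j:ℤ), ?_, ?_⟩
    · have t := Cb_succ m ((j:ℤ)-1)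
      have e : (j:ℤ)-1+1 = (j:ℤ) := by ring
      rw [e] at t
      linear_combination t
    · have t := Cb_succ m ((j:ℤ)-2)
      have e : (j:ℤ)-2+1 = (j:ℤ)-1 := by ring
      rw [e] at t
      linear_combination t
  constructor
  · intro j hj2
    rcases Nat.eq_zero_or_pos j with rfl | hj1
    · -- j = 0 : P 0 = 0 < P 1
      have hP0 : P 0 = 0 := by
        rw [hP 0]
        norm_num
        left
        simp [Cb]
      have hP1 : 0 < P 1 := by
        rw [hP 1]
        apply div_pos
        · norm_num
          exact_mod_cast Cb_pos m 0 le_rfl (by exact_mod_cast Nat.zero_le m)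
        · norm_num
          have : (0:ℝ) < (Cb m ((1:ℤ)-1) : ℝ) := by
            exact_mod_cast Cb_pos m 0 le_rfl (by exact_mod_cast Nat.zero_le m)
          norm_num at this
          positivity
      rw [hP0]; exact hP1
    · have h2jm : 2*j ≤ m := by omega
      obtain ⟨h1, h2, h3⟩ := ident j hj1
      have ha : (1:ℤ) ≤ (Cb m ((j:ℤ)-1) : ℤ) := by
        have := Cb_pos m ((j:ℤ)-1) (by omega) (by omega)
        exact_mod_cast this
      exact (main j hj1 (by omega)).1
        (key_lt (m:ℤ) (j:ℤ) _ _ _ _ (by exact_mod_cast hj1) (by exact_mod_cast h2jm)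
          ha h1 h2 h3)
  · intro j hj2 hjk
    have hj1 : 1 ≤ j := by omega
    have hjm1 : j ≤ m + 1 := by omega
    obtain ⟨h1, h2, h3⟩ := ident j hj1
    have ha : (1:ℤ) ≤ (Cb m ((j:ℤ)-1) : ℤ) := by
      have := Cb_pos m ((j:ℤ)-1) (by omega) (by omega)
      exact_mod_cast this
    exact (main j hj1 hjm1).2
      (key_gt (m:ℤ) (j:ℤ) _ _ _ _ (by omega) (by omega) ha h1 h2 h3)
end

section
/- Let k ≥ 2 and 1 ≤ q ≤ k. Then g(k,q) ≥ 2·g(k−1, q−1). -/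
/-- For `k ≥ 2` and `1 ≤ q ≤ k`, `g(k,q) ≥ 2·g(k−1,q−1)`. -/
theorem stmt_17 (k q : ℕ) (hk : 2 ≤ k) (hq : 1 ≤ q) (hqk : q ≤ k) :
    2 * gMin (k - 1) (q - 1) ≤ gMin k q := by
  obtain ⟨m, rfl⟩ : ∃ m, k = m + 1 := ⟨k - 1, by omega⟩
  obtain ⟨r, rfl⟩ : ∃ r, q = r + 1 := ⟨q - 1, by omega⟩
  simp only [Nat.add_sub_cancel]
  apply le_csInf
  · exact ⟨Set.ncard (Set.univ : Set (Fin (m+1) → Bool)), Set.univ, rfl,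
      fun F ε _ => ⟨ε, trivial, fun i _ => rfl⟩⟩
  · rintro n ⟨A, hcard, hA⟩
    set proj : (Fin (m+1) → Bool) → (Fin m → Bool) := fun x j => x j.castSucc with hproj
    have hhit : ∀ b : Bool, ∀ (F' : Finset (Fin m)) (ε' : Fin m → Bool), F'.card = r →
        ((proj '' (A ∩ {x | x (Fin.last m) = b})) ∩ Subcube F' ε').Nonempty := by
      intro b F' ε' hF'
      set F : Finset (Fin (m+1)) :=
        insert (Fin.last m) (F'.map ⟨Fin.castSucc, Fin.castSucc_injective m⟩) with hF
      have hlast : Fin.last m ∉ F'.map ⟨Fin.castSucc, Fin.castSucc_injective m⟩ := by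
        simp only [Finset.mem_map, Function.Embedding.coeFn_mk]
        rintro ⟨j, _, hj⟩
        exact absurd hj (Fin.ne_of_lt (Fin.castSucc_lt_last j))
      have hFcard : F.card = r + 1 := by
        rw [hF, Finset.card_insert_of_notMem hlast, Finset.card_map, hF']
      obtain ⟨a, haA, haS⟩ := hA F (Fin.snoc ε' b) hFcard
      have halast : a (Fin.last m) = b := by
        have := haS (Fin.last m) (Finset.mem_insert_self _ _)
        simpa [Fin.snoc_last] using this
      refine ⟨proj a, ⟨a, ⟨haA, halast⟩, rfl⟩, ?_⟩
      intro j hj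
      have hmem : j.castSucc ∈ F := by
        rw [hF]
        exact Finset.mem_insert_of_mem (Finset.mem_map_of_mem _ hj)
      have := haS j.castSucc hmem
      simpa [hproj, Fin.snoc_castSucc] using this
    have hg : ∀ b : Bool, gMin m r ≤ (proj '' (A ∩ {x | x (Fin.last m) = b})).ncard := by
      intro b
      exact Nat.sInf_le ⟨proj '' (A ∩ {x | x (Fin.last m) = b}), rfl, hhit b⟩
    have hle : ∀ b : Bool, (proj '' (A ∩ {x | x (Fin.last m) = b})).ncard ≤
        (A ∩ {x | x (Fin.last m) = b}).ncard := fun b => Set.ncard_image_le (Set.toFinite _)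
    have hsplit : (A ∩ {x | x (Fin.last m) = true}).ncard
        + (A ∩ {x | x (Fin.last m) = false}).ncard = A.ncard := by
      rw [← Set.ncard_union_eq]
      · congr 1
        ext x
        by_cases hx : x (Fin.last m) = true <;> simp [hx]
      · refine Set.disjoint_left.mpr ?_
        rintro x ⟨-, hx1⟩ ⟨-, hx2⟩
        simp only [Set.mem_setOf_eq] at hx1 hx2
        rw [hx1] at hx2; exact Bool.noConfusion hx2
    calc 2 * gMin m r = gMin m r + gMin m r := two_mul _
      _ ≤ (A ∩ {x | x (Fin.last m) = true}).ncard
          + (A ∩ {x | x (Fin.last m) = false}).ncard :=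
        Nat.add_le_add ((hg true).trans (hle true)) ((hg false).trans (hle false))
      _ = A.ncard := hsplit
      _ = n := hcard
end

section
/- Let 3 ≤ q ≤ k. Then u(k,q) ≥ 2^{q−2} · g(k−q+2, 2). -/
/-!
For a face `F` with `|F| ≤ q` and signs `ε`, the function `∏_{i ∈ F} (1 + ε_i x_i)` lies in
`(B^k_q)_+` and vanishes exactly off the subcube `{x | x_F = ε_F}`; so a set of uniqueness for
`(B^k_q)_+` meets every `(k − q)`-subcube. Fixing the first `q − 2` coordinates to any of the
`2^{q−2}` sign patterns, the corresponding slice of such a set then meets every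
`(k − q)`-subcube of `{−1,+1}^{k−q+2}`, hence has at least `g(k − q + 2, 2)` points.
-/

open Finset

lemma prod_subcube_weight_mem_BSpace {k q : ℕ} (F : Finset (Fin k)) (hF : F.card ≤ q)
    (ε : Fin k → Bool) :
    (fun x => ∏ i ∈ F, if x i = ε i then (2 : ℝ) else 0) ∈ BSpace k q := by
  have expand : (fun x : Fin k → Bool => ∏ i ∈ F, if x i = ε i then (2 : ℝ) else 0) =
      ∑ L ∈ F.powerset, Walsh L ε • Walsh L := by
    funext x
    have two_mul_eq : ∀ i ∈ F, (if x i = ε i then (2 : ℝ) else 0) =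
        (if ε i then (1 : ℝ) else -1) * (if x i then 1 else -1) + 1 := by
      intro i _
      cases x i <;> cases ε i <;> norm_num
    rw [prod_congr rfl two_mul_eq, prod_add]
    simp only [Finset.sum_apply, Pi.smul_apply, smul_eq_mul, Walsh, prod_const_one, mul_one,
      prod_mul_distrib]
  rw [expand]
  exact Submodule.sum_mem _ fun L hL => Submodule.smul_mem _ _ <| Submodule.subset_span
    ⟨L, (card_le_card (mem_powerset.mp hL)).trans hF, rfl⟩

lemma IsUniqSet.inter_subcube_nonempty {k q : ℕ} {U : Set (Fin k → Bool)}
    (hU : IsUniqSet (BPlus k q) U) (F : Finset (Fin k)) (hF : F.card ≤ q) (ε : Fin k → Bool) :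
    (U ∩ Subcube F ε).Nonempty := by
  by_contra hdisj
  set φ : (Fin k → Bool) → ℝ := fun x => ∏ i ∈ F, if x i = ε i then (2 : ℝ) else 0
  have hφ : φ ∈ BPlus k q :=
    ⟨prod_subcube_weight_mem_BSpace F hF ε, fun x => prod_nonneg fun i _ => by split <;> norm_num⟩
  have hφU : ∀ x ∈ U, φ x = 0 := by
    intro x hx
    obtain ⟨i, hiF, hne⟩ : ∃ i ∈ F, x i ≠ ε i := by
      by_contra! h
      exact hdisj ⟨x, hx, h⟩
    exact prod_eq_zero hiF (if_neg hne)
  have hφε : φ ε = 2 ^ F.card := by simp [φ]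
  rw [hU φ hφ hφU] at hφε
  exact pow_ne_zero F.card two_ne_zero (by simpa using hφε.symm)

lemma isUniqSet_univ {k : ℕ} (C : Set ((Fin k → Bool) → ℝ)) : IsUniqSet C Set.univ :=
  fun _ _ h => funext fun x => h x (Set.mem_univ x)

section Slices

variable {t m : ℕ}

lemma ncard_eq_sum_ncard_preimage_append {α : Type*} [Fintype α] (U : Set (Fin (t + m) → α)) :
    U.ncard = ∑ a : Fin t → α, (Fin.append a ⁻¹' U).ncard := by
  classical
  let front : (Fin (t + m) → α) → Fin t → α := fun x i => x (Fin.castAdd m i)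
  rw [Set.ncard_eq_toFinset_card', card_eq_sum_card_fiberwise (f := front) (t := univ)
    fun _ _ => mem_univ _]
  refine sum_congr rfl fun a _ => ?_
  have hinj : Function.Injective (Fin.append (n := m) a) := fun y z h => by
    funext j
    simpa using congrFun h (Fin.natAdd t j)
  have fiber : {x ∈ U.toFinset | front x = a} =
      (Fin.append a ⁻¹' U).toFinset.image (Fin.append a) := by
    ext x
    simp only [mem_filter, Set.mem_toFinset, mem_image, Set.mem_preimage]
    constructor
    · rintro ⟨hx, rfl⟩
      exact ⟨fun j => x (Fin.natAdd t j), by rwa [Fin.append_castAdd_natAdd],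
        Fin.append_castAdd_natAdd⟩
    · rintro ⟨y, hy, rfl⟩
      exact ⟨hy, funext fun i => Fin.append_left a y i⟩
  rw [fiber, card_image_of_injective _ hinj, Set.ncard_eq_toFinset_card']

lemma inter_subcube_preimage_append_nonempty {U : Set (Fin (t + m) → Bool)} {r : ℕ}
    (hU : ∀ (F : Finset (Fin (t + m))) (ε : Fin (t + m) → Bool), F.card = t + r →
      (U ∩ Subcube F ε).Nonempty)
    (a : Fin t → Bool) (F : Finset (Fin m)) (ε : Fin m → Bool) (hF : F.card = r) :
    (Fin.append a ⁻¹' U ∩ Subcube F ε).Nonempty := by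
  let F' : Finset (Fin (t + m)) := (univ.disjSum F).map finSumFinEquiv.toEmbedding
  have hleft : ∀ i, Fin.castAdd m i ∈ F' := fun i => mem_map_equiv.mpr (by simp)
  have hright : ∀ j ∈ F, Fin.natAdd t j ∈ F' := fun j hj =>
    mem_map_equiv.mpr (by simpa using hj)
  obtain ⟨x, hxU, hxF'⟩ := hU F' (Fin.append a ε) (by simp [F', hF])
  refine ⟨fun j => x (Fin.natAdd t j), ?_, fun j hj => by simpa using hxF' _ (hright j hj)⟩
  have hprefix : (fun i => x (Fin.castAdd m i)) = a := funext fun i => by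
    simpa using hxF' _ (hleft i)
  rw [Set.mem_preimage, ← hprefix, Fin.append_castAdd_natAdd]
  exact hxU

lemma two_pow_mul_gMin_le_ncard {r : ℕ} {U : Set (Fin (t + m) → Bool)}
    (hU : ∀ (F : Finset (Fin (t + m))) (ε : Fin (t + m) → Bool), F.card = t + r →
      (U ∩ Subcube F ε).Nonempty) :
    2 ^ t * gMin m r ≤ U.ncard := by
  calc 2 ^ t * gMin m r = ∑ _a : Fin t → Bool, gMin m r := by simp
    _ ≤ ∑ a : Fin t → Bool, (Fin.append a ⁻¹' U).ncard := sum_le_sum fun a _ =>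
        Nat.sInf_le ⟨_, rfl, fun F ε hF => inter_subcube_preimage_append_nonempty hU a F ε hF⟩
    _ = U.ncard := (ncard_eq_sum_ncard_preimage_append U).symm

end Slices

/-- For `3 ≤ q ≤ k`, `u(k,q) ≥ 2^{q−2} · g(k−q+2, 2)`. -/
theorem stmt_19 (k q : ℕ) (hq : 3 ≤ q) (hqk : q ≤ k) :
    2 ^ (q - 2) * gMin (k - q + 2) 2 ≤ uMin k q := by
  obtain ⟨m, rfl⟩ : ∃ m, k = (q - 2) + m := ⟨k - (q - 2), by omega⟩
  rw [show q - 2 + m - q + 2 = m by omega]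
  refine le_csInf ⟨_, Set.univ, rfl, isUniqSet_univ _⟩ ?_
  rintro _ ⟨U, rfl, hU⟩
  exact two_pow_mul_gMin_le_ncard fun F ε hF =>
    hU.inter_subcube_nonempty F (by omega) ε
end
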